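/- arXiv:1303.0512 — 5 statements merged into one kernel-verified Lean document; each statement's English description precedes it below -/
import Mathlib

section
/- If f(z) = z + a_{n+1}z^{n+1} + ... is analytic in the open unit disk U, ρ > 0 is real, β is a complex number with Re(β) < n+1, and |z·f''(z) − β·(f'(z) − f(z)/z)| < ρ·|n+1−β| for all z in U, then |f'(z) − f(z)/z| < ρ for all z in U. -/
open Metric Set Filter Complex Function MeasureTheory
open scoped Topology Nat

private lemma iteratedDeriv_eq_coeff {f : ℂ → ℂ} {q : FormalMultilinearSeries ℂ ℂ ℂ}
    (hq : HasFPowerSeriesAt f q 0) (j : ℕ) :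
    iteratedDeriv j f 0 = (j ! : ℂ) * q.coeff j := by
  obtain ⟨r, hr⟩ := hq
  have h := hr.factorial_smul (1 : ℂ) j
  rw [iteratedDeriv_eq_iteratedFDeriv, ← h, nsmul_eq_mul]
  congr 1

private lemma analyticOnNhd_dslope {u : ℂ → ℂ} (hu : AnalyticOnNhd ℂ u (ball 0 1)) :
    AnalyticOnNhd ℂ (dslope u 0) (ball 0 1) := by
  intro x hx
  rcases eq_or_ne x 0 with rfl | hx0
  · obtain ⟨q, hq⟩ := hu 0 hx
    exact hq.has_fpower_series_dslope_fslope.analyticAt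
  · have h1 : AnalyticAt ℂ (fun z => (u z - u 0) / (z - 0)) x :=
      ((hu x hx).sub analyticAt_const).div (analyticAt_id.sub analyticAt_const)
        (by simpa using hx0)
    refine h1.congr ?_
    filter_upwards [eventually_ne_nhds hx0] with z hz
    rw [dslope_of_ne u hz, slope_def_field]

private lemma factor_pow : ∀ (n : ℕ) (u : ℂ → ℂ), AnalyticOnNhd ℂ u (ball 0 1) →
    (∀ j < n, iteratedDeriv j u 0 = 0) →
    ∃ v : ℂ → ℂ, AnalyticOnNhd ℂ v (ball 0 1) ∧ ∀ z ∈ ball 0 1, u z = z ^ n * v z := by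
  intro n
  induction n with
  | zero => exact fun u hu _ => ⟨u, hu, by simp⟩
  | succ n ih =>
    intro u hu h0
    have h0mem : (0:ℂ) ∈ ball (0:ℂ) 1 := by simp
    have hu0 : u 0 = 0 := by simpa using h0 0 (Nat.succ_pos n)
    obtain ⟨q, hq⟩ := hu 0 h0mem
    have hq' := hq.has_fpower_series_dslope_fslope
    have hd : AnalyticOnNhd ℂ (dslope u 0) (ball 0 1) := analyticOnNhd_dslope hu
    have h0' : ∀ j < n, iteratedDeriv j (dslope u 0) 0 = 0 := by
      intro j hj
      rw [iteratedDeriv_eq_coeff hq' j, FormalMultilinearSeries.coeff_fslope]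
      have h2 := iteratedDeriv_eq_coeff hq (j+1)
      rw [h0 (j+1) (by omega)] at h2
      have hfac : ((j+1)! : ℂ) ≠ 0 := by
        exact_mod_cast Nat.cast_ne_zero.mpr (Nat.factorial_ne_zero (j+1))
      have : q.coeff (j+1) = 0 := by
        have h3 := h2.symm
        exact (mul_eq_zero.mp h3).resolve_left hfac
      rw [this, mul_zero]
    obtain ⟨v, hv, huv⟩ := ih (dslope u 0) hd h0'
    refine ⟨v, hv, fun z hz => ?_⟩
    have hs := sub_smul_dslope u 0 z
    rw [hu0, sub_zero, sub_zero, smul_eq_mul] at hs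
    rw [← hs, huv z hz]; ring

private lemma sup_bound {v u : ℂ → ℂ} {n : ℕ} {M : ℝ}
    (hv : AnalyticOnNhd ℂ v (ball 0 1))
    (huv : ∀ z ∈ ball 0 1, u z = z ^ n * v z)
    (hu : ∀ z ∈ ball 0 1, ‖u z‖ ≤ M) :
    ∀ z ∈ ball 0 1, ‖v z‖ ≤ M := by
  intro z hz
  rw [mem_ball, dist_zero_right] at hz
  have key : ∀ r : ℝ, ‖z‖ < r → r < 1 → ‖v z‖ ≤ M / r ^ n := by
    intro r h1 h2
    have hr0 : 0 < r := lt_of_le_of_lt (norm_nonneg z) h1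
    have hrn : (0:ℝ) < r ^ n := pow_pos hr0 n
    have hsub : closedBall (0:ℂ) r ⊆ ball 0 1 := closedBall_subset_ball h2
    have hdc : DiffContOnCl ℂ v (ball 0 r) := by
      refine ⟨(hv.mono (ball_subset_ball h2.le)).differentiableOn, ?_⟩
      rw [closure_ball (0:ℂ) hr0.ne']
      exact (hv.mono hsub).continuousOn
    have hfr : ∀ w ∈ frontier (ball (0:ℂ) r), ‖v w‖ ≤ M / r ^ n := by
      intro w hw
      rw [frontier_ball (0:ℂ) hr0.ne', mem_sphere, dist_zero_right] at hw
      have hwb : w ∈ ball (0:ℂ) 1 := by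
        rw [mem_ball, dist_zero_right, hw]; exact h2
      have := hu w hwb
      rw [huv w hwb] at this
      rw [norm_mul, norm_pow, hw] at this
      rw [le_div_iff₀ hrn]
      linarith [this]
    have hcl : z ∈ closure (ball (0:ℂ) r) := by
      rw [closure_ball (0:ℂ) hr0.ne', mem_closedBall, dist_zero_right]
      exact h1.le
    exact Complex.norm_le_of_forall_mem_frontier_norm_le isBounded_ball hdc hfr hcl
  have hlim : Tendsto (fun r : ℝ => M / r ^ n) (𝓝[<] 1) (𝓝 M) := by
    have : ContinuousAt (fun r : ℝ => M / r ^ n) 1 := by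
      exact ContinuousAt.div continuousAt_const (continuousAt_pow 1 n) (by norm_num)
    simpa using this.continuousWithinAt.tendsto
  refine ge_of_tendsto hlim ?_
  filter_upwards [Ioo_mem_nhdsLT_of_mem (Set.mem_Ioc.2 ⟨hz, le_refl 1⟩)] with r hr
  exact key r hr.1 hr.2


/-- Lemma 2 (Lemma 1.1): If `f ∈ A_n` and
`|z f''(z) - β (f'(z) - f(z)/z)| < ρ |n+1-β|` on `U` for some real `ρ > 0` and
complex `β` with `Re β < n+1`, then `|f'(z) - f(z)/z| < ρ` on `U`. -/
theorem stmt_0 (n : ℕ) (hn : 1 ≤ n) (f : ℂ → ℂ)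
    (hf : AnalyticOn ℂ f (Metric.ball 0 1))
    (hf0 : f 0 = 0) (hf1 : deriv f 0 = 1)
    (hcoef : ∀ k : ℕ, 2 ≤ k → k ≤ n → iteratedDeriv k f 0 = 0)
    (ρ : ℝ) (hρ : 0 < ρ) (β : ℂ) (hβ : β.re < n + 1)
    (h : ∀ z ∈ Metric.ball (0 : ℂ) 1, z ≠ 0 →
      ‖z * deriv (deriv f) z - β * (deriv f z - f z / z)‖ <
        ρ * ‖(n : ℂ) + 1 - β‖) :
    ∀ z ∈ Metric.ball (0 : ℂ) 1, z ≠ 0 →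
      ‖deriv f z - f z / z‖ < ρ := by
  have hball : IsOpen (ball (0:ℂ) 1) := isOpen_ball
  have hfn : AnalyticOnNhd ℂ f (ball 0 1) := hball.analyticOn_iff_analyticOnNhd.mp hf
  have h0mem : (0:ℂ) ∈ ball (0:ℂ) 1 := by simp
  -- the function u = f - id vanishes to order n+1 at 0
  set u : ℂ → ℂ := fun z => f z - z with hu_def
  have hu_an : AnalyticOnNhd ℂ u (ball 0 1) := fun x hx => (hfn x hx).sub analyticAt_id
  have hu_coef : ∀ j < n + 1, iteratedDeriv j u 0 = 0 := by
    obtain ⟨q, hq⟩ := hfn 0 h0mem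
    set P : FormalMultilinearSeries ℂ ℂ ℂ := (ContinuousLinearMap.id ℂ ℂ).fpowerSeries 0 with hP
    have hqid : HasFPowerSeriesAt (fun z : ℂ => z) P 0 :=
      (ContinuousLinearMap.id ℂ ℂ).hasFPowerSeriesAt 0
    have hqu : HasFPowerSeriesAt u (q - P) 0 := hq.sub hqid
    -- coefficients of q
    have hq0 : q.coeff 0 = 0 := by
      have := iteratedDeriv_eq_coeff hq 0
      simpa [hf0] using this.symm
    have hq1 : q.coeff 1 = 1 := by
      have := iteratedDeriv_eq_coeff hq 1
      rw [iteratedDeriv_one, hf1] at this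
      simpa using this.symm
    have hqk : ∀ j, 2 ≤ j → j ≤ n → q.coeff j = 0 := by
      intro j h2 hjn
      have h3 := iteratedDeriv_eq_coeff hq j
      rw [hcoef j h2 hjn] at h3
      have hfac : ((j)! : ℂ) ≠ 0 := Nat.cast_ne_zero.mpr (Nat.factorial_ne_zero j)
      exact (mul_eq_zero.mp h3.symm).resolve_left hfac
    -- coefficients of P
    have hP0 : P.coeff 0 = 0 := by simp [hP, FormalMultilinearSeries.coeff]
    have hP1 : P.coeff 1 = 1 := by simp [hP, FormalMultilinearSeries.coeff]
    have hPk : ∀ j, 2 ≤ j → P.coeff j = 0 := by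
      intro j h2
      obtain ⟨m, rfl⟩ : ∃ m, j = m + 2 := ⟨j - 2, by omega⟩
      simp [hP, FormalMultilinearSeries.coeff]
    have hsub : ∀ j, (q - P).coeff j = q.coeff j - P.coeff j := fun j => rfl
    intro j hj
    rw [iteratedDeriv_eq_coeff hqu j, hsub j]
    rcases j with _ | j
    · rw [hq0, hP0]; ring
    · rcases j with _ | j
      · rw [hq1, hP1]; ring
      · rw [hqk (j+2) (by omega) (by omega), hPk (j+2) (by omega)]; ring
  obtain ⟨w, hw_an, hw⟩ := factor_pow (n+1) u hu_an hu_coef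
  have hf_eq : ∀ z ∈ ball (0:ℂ) 1, f z = z + z ^ (n+1) * w z := by
    intro z hz
    have := hw z hz
    simp only [hu_def] at this
    linear_combination this
  -- replace n by m+1
  obtain ⟨m, rfl⟩ : ∃ m, n = m + 1 := ⟨n - 1, by omega⟩
  set n := m + 1 with hnm
  -- the function g = dslope f 0 (analytic extension of f z / z)
  set g : ℂ → ℂ := dslope f 0 with hg_def
  have hg_an : AnalyticOnNhd ℂ g (ball 0 1) := analyticOnNhd_dslope hfn
  have hg_eq : ∀ z ∈ ball (0:ℂ) 1, g z = 1 + z ^ n * w z := by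
    intro z hz
    rcases eq_or_ne z 0 with rfl | hz0
    · rw [hg_def, dslope_same, hf1]
      simp [hnm]
    · rw [hg_def, dslope_of_ne f hz0, slope_def_field, hf0, sub_zero, sub_zero,
        hf_eq z hz]
      field_simp
      ring
  -- the function p = f' - f z / z and its factorization p = z^n * P
  set p : ℂ → ℂ := fun z => deriv f z - g z with hp_def
  have hp_an : AnalyticOnNhd ℂ p (ball 0 1) :=
    fun x hx => ((hfn.deriv_of_isOpen hball) x hx).sub (hg_an x hx)
  set P : ℂ → ℂ := fun z => (n : ℂ) * w z + z * deriv w z with hP_def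
  have hw'_an : AnalyticOnNhd ℂ (deriv w) (ball 0 1) := hw_an.deriv_of_isOpen hball
  have hP_an : AnalyticOnNhd ℂ P (ball 0 1) := fun x hx =>
    ((analyticAt_const).mul (hw_an x hx)).add (analyticAt_id.mul (hw'_an x hx))
  have hf'_eq : ∀ z ∈ ball (0:ℂ) 1, deriv f z
      = 1 + (((n:ℂ)+1) * z ^ n * w z + z ^ (n+1) * deriv w z) := by
    intro z hz
    have heq : f =ᶠ[𝓝 z] fun ζ => ζ + ζ ^ (n+1) * w ζ := by
      filter_upwards [hball.mem_nhds hz] with ζ hζ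
      exact hf_eq ζ hζ
    rw [heq.deriv_eq]
    have hd : HasDerivAt (fun ζ : ℂ => ζ + ζ ^ (n+1) * w ζ)
        (1 + (((n:ℂ)+1) * z ^ n * w z + z ^ (n+1) * deriv w z)) z := by
      have h1 : HasDerivAt (fun ζ : ℂ => ζ ^ (n+1)) (((n:ℂ)+1) * z ^ n) z := by
        simpa using hasDerivAt_pow (n+1) z
      have h2 : HasDerivAt w (deriv w z) z := (hw_an z hz).differentiableAt.hasDerivAt
      exact (hasDerivAt_id' z).add (h1.mul h2)
    exact hd.deriv
  have hpP : ∀ z ∈ ball (0:ℂ) 1, p z = z ^ n * P z := by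
    intro z hz
    rw [hp_def]
    simp only
    rw [hf'_eq z hz, hg_eq z hz, hP_def]
    simp only
    ring
  -- derivative of p on the ball
  have hp'_eq : ∀ z ∈ ball (0:ℂ) 1, deriv p z
      = (n : ℂ) * z ^ m * P z + z ^ n * deriv P z := by
    intro z hz
    have heq : p =ᶠ[𝓝 z] fun ζ => ζ ^ n * P ζ := by
      filter_upwards [hball.mem_nhds hz] with ζ hζ
      exact hpP ζ hζ
    rw [heq.deriv_eq]
    have h1 : HasDerivAt (fun ζ : ℂ => ζ ^ n) ((n:ℂ) * z ^ m) z := by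
      simpa [hnm] using hasDerivAt_pow n z
    have h2 : HasDerivAt P (deriv P z) z := (hP_an z hz).differentiableAt.hasDerivAt
    exact (h1.mul h2).deriv
  -- the functions h and Q with hfun = z^n * Q
  set hfun : ℂ → ℂ := fun z => z * deriv p z + (1 - β) * p z with hh_def
  set Q : ℂ → ℂ := fun z => ((n:ℂ) + 1 - β) * P z + z * deriv P z with hQ_def
  have hP'_an : AnalyticOnNhd ℂ (deriv P) (ball 0 1) := hP_an.deriv_of_isOpen hball
  have hQ_an : AnalyticOnNhd ℂ Q (ball 0 1) := fun x hx =>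
    ((analyticAt_const).mul (hP_an x hx)).add (analyticAt_id.mul (hP'_an x hx))
  have hhQ : ∀ z ∈ ball (0:ℂ) 1, hfun z = z ^ n * Q z := by
    intro z hz
    rw [hh_def]
    simp only
    rw [hp'_eq z hz, hpP z hz, hQ_def]
    simp only [hnm]
    ring
  -- bound on hfun from the hypothesis
  set M : ℝ := ρ * ‖(n : ℂ) + 1 - β‖ with hM_def
  have hcpos : (0:ℝ) < (n:ℝ) + 1 - β.re := by
    have hβ' := hβ
    push_cast at hβ' ⊢
    linarith
  have hn1β : ((n:ℂ) + 1 - β) ≠ 0 := by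
    intro hcontra
    have h5 : ((n:ℂ) + 1 - β).re = 0 := by rw [hcontra, Complex.zero_re]
    rw [Complex.sub_re, Complex.add_re, Complex.natCast_re, Complex.one_re] at h5
    linarith
  have hMpos : 0 < M := by
    rw [hM_def]
    exact mul_pos hρ (norm_pos_iff.mpr hn1β)
  have hp0 : p 0 = 0 := by
    rw [hp_def]
    simp only [hg_def, dslope_same, hf1]
    ring
  have hhM : ∀ z ∈ ball (0:ℂ) 1, ‖hfun z‖ ≤ M := by
    intro z hz
    rcases eq_or_ne z 0 with rfl | hz0
    · rw [hh_def]
      simp only [hp0]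
      simp [hMpos.le]
    · have hsplit : hfun z = z * deriv (deriv f) z - β * (deriv f z - f z / z) := by
        have hgd : deriv g z = (deriv f z * z - f z) / z ^ 2 := by
          have heq : g =ᶠ[𝓝 z] fun ζ => f ζ / ζ := by
            have hmem : (ball (0:ℂ) 1 ∩ {(0:ℂ)}ᶜ) ∈ 𝓝 z :=
              (hball.inter (isOpen_compl_singleton)).mem_nhds ⟨hz, hz0⟩
            filter_upwards [hmem] with ζ hζ
            rw [hg_def, dslope_of_ne f hζ.2, slope_def_field, hf0, sub_zero, sub_zero]
          rw [heq.deriv_eq, deriv_fun_div (hfn z hz).differentiableAt differentiableAt_fun_id hz0]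
          simp
        have hpd : deriv p z = deriv (deriv f) z - deriv g z := by
          have heq : p =ᶠ[𝓝 z] fun ζ => deriv f ζ - g ζ := by
            filter_upwards [hball.mem_nhds hz] with ζ hζ
            rw [hp_def]
          rw [heq.deriv_eq, deriv_fun_sub ((hfn.deriv_of_isOpen hball) z hz).differentiableAt
            (hg_an z hz).differentiableAt]
        have hgz : g z = f z / z := by
          rw [hg_def, dslope_of_ne f hz0, slope_def_field, hf0, sub_zero, sub_zero]
        rw [hh_def]
        simp only
        rw [hpd, hgd, hp_def]
        simp only [hgz]
        field_simp
        ring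
      rw [hsplit]
      exact (h z hz hz0).le
  -- Schwarz-type bound on Q
  have hQM : ∀ z ∈ ball (0:ℂ) 1, ‖Q z‖ ≤ M := sup_bound hQ_an hhQ hhM
  -- hfun is analytic
  have hh_an : AnalyticOnNhd ℂ hfun (ball 0 1) := fun x hx =>
    (analyticAt_id.mul ((hp_an.deriv_of_isOpen hball) x hx)).add
      (analyticAt_const.mul (hp_an x hx))
  -- now fix z
  intro z hz hz0
  have hz1 : ‖z‖ < 1 := by rwa [mem_ball, dist_zero_right] at hz
  set r : ℝ := ‖z‖ with hr_def
  have hr0 : 0 < r := norm_pos_iff.mpr hz0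
  have hPc : ContinuousOn P (closedBall (0:ℂ) r) :=
    (hP_an.mono (closedBall_subset_ball hz1)).continuousOn
  obtain ⟨C, hC⟩ := (isCompact_closedBall (0:ℂ) r).exists_bound_of_continuousOn hPc
  have hC0 : 0 ≤ C := (norm_nonneg _).trans (hC 0 (by simp [hr0.le]))
  -- constants
  set c : ℝ := (n:ℝ) + 1 - β.re with hc_def
  set b : ℝ := β.im with hb_def
  set γ : ℝ := -b / c with hγ_def
  set K : ℝ := c + b ^ 2 / c with hK_def
  have hKpos : 0 < K := by
    rw [hK_def]
    have : 0 ≤ b ^ 2 / c := div_nonneg (sq_nonneg b) hcpos.le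
    linarith
  set lam : ℂ := -1 + (γ:ℂ) * Complex.I with hlam_def
  have hlam_re : lam.re = -1 := by simp [hlam_def]
  have hlam_im : lam.im = γ := by simp [hlam_def]
  have he1 : ((1 - β) * lam).re = β.re - 1 + b * γ := by
    rw [Complex.mul_re, Complex.sub_re, Complex.sub_im, Complex.one_re, Complex.one_im,
      hlam_re, hlam_im, hb_def]
    ring
  have hβre : β.re = (n:ℝ) + 1 - c := by rw [hc_def]; ring
  have hcne : c ≠ 0 := ne_of_gt hcpos
  have he1K : ((1 - β) * lam).re - n = -K := by
    rw [he1, hγ_def, hK_def, hβre]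
    field_simp
    ring
  have habs_lam : ‖lam‖ = Real.sqrt (1 + γ ^ 2) := by
    rw [Complex.norm_def, Complex.normSq_apply, hlam_re, hlam_im]
    congr 1
    ring
  have habs_nβ : ‖(n:ℂ) + 1 - β‖ = Real.sqrt (c ^ 2 + b ^ 2) := by
    rw [Complex.norm_def, Complex.normSq_apply]
    have h1 : ((n:ℂ) + 1 - β).re = c := by
      rw [Complex.sub_re, Complex.add_re, Complex.natCast_re, Complex.one_re, hc_def]
    have h2 : ((n:ℂ) + 1 - β).im = -b := by
      rw [Complex.sub_im, Complex.add_im, Complex.natCast_im, Complex.one_im, hb_def]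
      ring
    rw [h1, h2]
    congr 1
    ring
  have hsqrtK : Real.sqrt (1 + γ ^ 2) * Real.sqrt (c ^ 2 + b ^ 2) = K := by
    rw [← Real.sqrt_mul (by positivity)]
    rw [show (1 + γ ^ 2) * (c ^ 2 + b ^ 2) = K ^ 2 by
      rw [hγ_def, hK_def]; field_simp]
    exact Real.sqrt_sq hKpos.le
  -- the spiral trajectory
  set ω : ℝ → ℂ := fun τ => z * Complex.exp (lam * τ) with hω_def
  have hω_norm : ∀ τ : ℝ, ‖ω τ‖ = r * Real.exp (-τ) := by
    intro τ
    have hre : (lam * (τ:ℂ)).re = -τ := by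
      rw [Complex.mul_re, hlam_re, hlam_im, Complex.ofReal_re, Complex.ofReal_im]
      ring
    rw [hω_def]
    simp only
    rw [norm_mul, Complex.norm_exp, hre, hr_def]
  have hω_le : ∀ τ : ℝ, 0 ≤ τ → ‖ω τ‖ ≤ r := by
    intro τ hτ
    rw [hω_norm τ]
    nlinarith [Real.exp_le_one_iff.mpr (by linarith : -τ ≤ 0), Real.exp_pos (-τ)]
  have hω_mem : ∀ τ : ℝ, 0 ≤ τ → ω τ ∈ ball (0:ℂ) 1 := by
    intro τ hτ
    rw [mem_ball, dist_zero_right]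
    exact lt_of_le_of_lt (hω_le τ hτ) hz1
  set F : ℝ → ℂ := fun τ => Complex.exp ((1 - β) * lam * τ) * p (ω τ) with hF_def
  set F' : ℝ → ℂ := fun τ => lam * Complex.exp ((1 - β) * lam * τ) * hfun (ω τ) with hF'_def
  have hre2 : ∀ τ : ℝ, ((1 - β) * lam * (τ:ℂ)).re = ((1 - β) * lam).re * τ := by
    intro τ
    rw [Complex.mul_re, Complex.ofReal_re, Complex.ofReal_im]
    ring
  -- derivative
  have hderiv : ∀ τ ∈ Ici (0:ℝ), HasDerivAt F (F' τ) τ := by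
    intro τ hτ
    have hmem := hω_mem τ hτ
    have h1 : HasDerivAt (fun s : ℝ => ((s : ℝ) : ℂ)) 1 τ := by
      simpa using (hasDerivAt_id τ).ofReal_comp
    have h2 : HasDerivAt (fun s : ℝ => (1 - β) * lam * (s : ℂ)) ((1 - β) * lam) τ := by
      simpa using h1.const_mul ((1 - β) * lam)
    have h3 : HasDerivAt (fun s : ℝ => Complex.exp ((1 - β) * lam * (s : ℂ)))
        (Complex.exp ((1 - β) * lam * (τ : ℂ)) * ((1 - β) * lam)) τ := h2.cexp
    have h4 : HasDerivAt (fun s : ℝ => lam * (s : ℂ)) lam τ := by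
      simpa using h1.const_mul lam
    have h5 : HasDerivAt (fun s : ℝ => Complex.exp (lam * (s : ℂ)))
        (Complex.exp (lam * (τ : ℂ)) * lam) τ := h4.cexp
    have h6 : HasDerivAt ω (z * (Complex.exp (lam * (τ : ℂ)) * lam)) τ := by
      rw [hω_def]
      exact h5.const_mul z
    have h7 : HasDerivAt p (deriv p (ω τ)) (ω τ) :=
      (hp_an _ hmem).differentiableAt.hasDerivAt
    have h8 : HasDerivAt (fun s : ℝ => p (ω s))
        (deriv p (ω τ) * (z * (Complex.exp (lam * (τ : ℂ)) * lam))) τ := h7.comp τ h6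
    have h9 := h3.mul h8
    refine HasDerivAt.congr_deriv h9 ?_
    rw [hF'_def, hh_def]
    simp only
    rw [hω_def]
    simp only
    ring
  -- pointwise bounds
  have hFb : ∀ τ : ℝ, 0 ≤ τ → ‖F τ‖ ≤ C * r ^ n * Real.exp (-K * τ) := by
    intro τ hτ
    have hmem := hω_mem τ hτ
    rw [hF_def]
    simp only
    rw [norm_mul, Complex.norm_exp, hre2 τ]
    have hp_norm : ‖p (ω τ)‖ ≤ (r * Real.exp (-τ)) ^ n * C := by
      rw [hpP _ hmem, norm_mul, norm_pow, hω_norm τ]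
      have hPb : ‖P (ω τ)‖ ≤ C := by
        apply hC
        rw [mem_closedBall, dist_zero_right]
        exact hω_le τ hτ
      exact mul_le_mul_of_nonneg_left hPb (by positivity)
    calc Real.exp (((1 - β) * lam).re * τ) * ‖p (ω τ)‖
        ≤ Real.exp (((1 - β) * lam).re * τ) * ((r * Real.exp (-τ)) ^ n * C) :=
          mul_le_mul_of_nonneg_left hp_norm (Real.exp_pos _).le
      _ = C * r ^ n * Real.exp (-K * τ) := by
          rw [mul_pow, ← Real.exp_nat_mul]
          rw [show -K * τ = ((1 - β) * lam).re * τ + (n : ℝ) * (-τ) by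
            linear_combination (-τ) * he1K]
          rw [Real.exp_add]
          ring
  have hF'b : ∀ τ : ℝ, 0 ≤ τ → ‖F' τ‖ ≤ ‖lam‖ * M * r ^ n * Real.exp (-K * τ) := by
    intro τ hτ
    have hmem := hω_mem τ hτ
    rw [hF'_def]
    simp only
    rw [norm_mul, norm_mul, Complex.norm_exp, hre2 τ]
    have hh_norm : ‖hfun (ω τ)‖ ≤ (r * Real.exp (-τ)) ^ n * M := by
      rw [hhQ _ hmem, norm_mul, norm_pow, hω_norm τ]
      exact mul_le_mul_of_nonneg_left (hQM _ hmem) (by positivity)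
    calc ‖lam‖ * Real.exp (((1 - β) * lam).re * τ) * ‖hfun (ω τ)‖
        ≤ ‖lam‖ * Real.exp (((1 - β) * lam).re * τ) * ((r * Real.exp (-τ)) ^ n * M) := by
          apply mul_le_mul_of_nonneg_left hh_norm
          positivity
      _ = ‖lam‖ * M * r ^ n * Real.exp (-K * τ) := by
          rw [mul_pow, ← Real.exp_nat_mul]
          rw [show -K * τ = ((1 - β) * lam).re * τ + (n : ℝ) * (-τ) by
            linear_combination (-τ) * he1K]
          rw [Real.exp_add]
          ring
  -- limit of F at infinity
  have hg0 : Tendsto (fun τ : ℝ => C * r ^ n * Real.exp (-K * τ)) atTop (𝓝 0) := by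
    rw [show (0:ℝ) = C * r ^ n * 0 by ring]
    apply Tendsto.const_mul
    exact Real.tendsto_exp_atBot.comp (tendsto_id.const_mul_atTop_of_neg (by linarith))
  have htend : Tendsto F atTop (𝓝 0) := by
    apply squeeze_zero_norm' ?_ hg0
    filter_upwards [eventually_ge_atTop (0:ℝ)] with τ hτ using hFb τ hτ
  -- integrability of F'
  have hcontF' : ContinuousOn F' (Ici (0:ℝ)) := by
    rw [hF'_def]
    apply ContinuousOn.mul
    · apply Continuous.continuousOn
      exact continuous_const.mul (Complex.continuous_exp.comp
        (continuous_const.mul Complex.continuous_ofReal))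
    · have hωc : Continuous ω := by
        rw [hω_def]
        exact continuous_const.mul (Complex.continuous_exp.comp
          (continuous_const.mul Complex.continuous_ofReal))
      exact (hh_an.continuousOn).comp hωc.continuousOn (fun τ hτ => hω_mem τ hτ)
  have hint : IntegrableOn F' (Ioi (0:ℝ)) := by
    apply Integrable.mono' (g := fun τ => ‖lam‖ * M * r ^ n * Real.exp (-K * τ))
    · exact (exp_neg_integrableOn_Ioi 0 hKpos).const_mul _
    · exact (hcontF'.mono Ioi_subset_Ici_self).aestronglyMeasurable measurableSet_Ioi
    · rw [ae_restrict_iff' measurableSet_Ioi]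
      exact ae_of_all _ fun τ hτ => hF'b τ (le_of_lt hτ)
  -- fundamental theorem of calculus
  have hF0 : F 0 = p z := by
    rw [hF_def]
    simp only [hω_def]
    norm_num
  have hFTC : ∫ τ in Ioi (0:ℝ), F' τ = 0 - F 0 :=
    integral_Ioi_of_hasDerivAt_of_tendsto' hderiv hint htend
  have hpz : p z = -∫ τ in Ioi (0:ℝ), F' τ := by
    rw [hFTC, hF0]
    ring
  -- value of the exponential integral
  have hexp_int : ∫ τ in Ioi (0:ℝ), Real.exp (-K * τ) = 1 / K := by
    have hA : ∀ τ ∈ Ici (0:ℝ), HasDerivAt (fun s : ℝ => -Real.exp (-K * s) / K)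
        (Real.exp (-K * τ)) τ := by
      intro τ _
      have h1 : HasDerivAt (fun s : ℝ => -K * s) (-K) τ := by
        simpa using (hasDerivAt_id τ).const_mul (-K)
      have h3 := (h1.exp.div_const K).neg
      have h4 : -(Real.exp (-K * τ) * -K / K) = Real.exp (-K * τ) := by
        field_simp
      rw [← h4]
      have h5 : (fun s : ℝ => -Real.exp (-K * s) / K) = -fun x => Real.exp (-K * x) / K := by
        funext s
        simp only [Pi.neg_apply]
        ring
      rw [h5]
      exact h3
    have htd : Tendsto (fun s : ℝ => -Real.exp (-K * s) / K) atTop (𝓝 0) := by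
      rw [show (0:ℝ) = -(0:ℝ) / K by ring]
      apply Tendsto.div_const
      apply Tendsto.neg
      exact Real.tendsto_exp_atBot.comp (tendsto_id.const_mul_atTop_of_neg (by linarith))
    have hff := integral_Ioi_of_hasDerivAt_of_tendsto' hA
      (exp_neg_integrableOn_Ioi 0 hKpos) htd
    rw [hff]
    norm_num [Real.exp_zero]
    ring
  -- final estimate
  have hnorm_int : ‖∫ τ in Ioi (0:ℝ), F' τ‖ ≤ ‖lam‖ * M * r ^ n * (1 / K) := by
    calc ‖∫ τ in Ioi (0:ℝ), F' τ‖ ≤ ∫ τ in Ioi (0:ℝ), ‖F' τ‖ :=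
          norm_integral_le_integral_norm _
      _ ≤ ∫ τ in Ioi (0:ℝ), ‖lam‖ * M * r ^ n * Real.exp (-K * τ) := by
          apply setIntegral_mono_on hint.norm
            ((exp_neg_integrableOn_Ioi 0 hKpos).const_mul _) measurableSet_Ioi
          intro τ hτ
          exact hF'b τ (le_of_lt hτ)
      _ = ‖lam‖ * M * r ^ n * (1 / K) := by
          rw [MeasureTheory.integral_const_mul, hexp_int]
  have hval : ‖lam‖ * M * r ^ n * (1 / K) = ρ * r ^ n := by
    rw [habs_lam, hM_def, habs_nβ]
    field_simp
    linear_combination hsqrtK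
  have hfinal : ‖p z‖ ≤ ρ * r ^ n := by
    rw [hpz, norm_neg]
    rw [← hval]
    exact hnorm_int
  have hgoal : ‖deriv f z - f z / z‖ = ‖p z‖ := by
    rw [hp_def]
    simp only
    rw [hg_def, dslope_of_ne f hz0, slope_def_field, hf0, sub_zero, sub_zero]
  rw [hgoal]
  calc ‖p z‖ ≤ ρ * r ^ n := hfinal
    _ < ρ * 1 := by
        apply mul_lt_mul_of_pos_left _ hρ
        exact pow_lt_one₀ (norm_nonneg z) hz1 (by omega)
    _ = ρ := mul_one ρ
end

section
/- If f(z) = z + a_{n+1}z^{n+1} + ... is analytic in the open unit disk U, 0 ≤ α < 1 is real, β is a complex number with Re(β) < n+1, and |z²·f'''(z) + (2−β)·z·f''(z)| < (1−α)·n·|n+1−β|/(n+1−α) for all z in U, then |z·f''(z)/f'(z)| < 1−α for all z in U; in particular Re(1 + z·f''(z)/f'(z)) > α, i.e. f is convex of order α. -/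
open Metric Set Complex Function Topology Filter

-- derivative of normSq along a real curve
lemma aux_normSq_deriv {g : ℝ → ℂ} {g' : ℂ} {t : ℝ} (hg : HasDerivAt g g' t) :
    HasDerivAt (fun s => Complex.normSq (g s))
      (2 * ((starRingEnd ℂ) (g t) * g').re) t := by
  have hre : HasDerivAt (fun s => (g s).re) g'.re t :=
    (Complex.reCLM.hasFDerivAt.comp_hasDerivAt t hg)
  have him : HasDerivAt (fun s => (g s).im) g'.im t :=
    (Complex.imCLM.hasFDerivAt.comp_hasDerivAt t hg)
  have := (hre.mul hre).add (him.mul him)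
  have h2 : ∀ s, Complex.normSq (g s) = (g s).re * (g s).re + (g s).im * (g s).im := by
    intro s; simp [Complex.normSq_apply]
  rw [show (fun s => Complex.normSq (g s)) = fun s => (g s).re * (g s).re + (g s).im * (g s).im
    from funext h2]
  refine this.congr_deriv ?_
  simp [Complex.mul_re, Complex.conj_re, Complex.conj_im]
  ring

-- composing a complex-differentiable map with a real curve
lemma aux_comp_curve {u : ℂ → ℂ} {d p : ℂ} (hu : HasDerivAt u d p)
    {g : ℝ → ℂ} {g' : ℂ} {t : ℝ} (hg : HasDerivAt g g' t) (hp : g t = p) :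
    HasDerivAt (fun s => u (g s)) (g' * d) t := by
  subst hp
  have := (hu.hasFDerivAt.restrictScalars ℝ).comp_hasDerivAt t hg
  exact this.congr_deriv (by simp)

-- Jack-lemma-type bound
lemma aux_jack {u : ℂ → ℂ} (hu : AnalyticOnNhd ℂ u (Metric.ball 0 1))
    {γ : ℂ} (hγ : 0 < γ.re) {M : ℝ}
    (hv : ∀ z ∈ Metric.ball (0 : ℂ) 1, ‖z * deriv u z + γ * u z‖ ≤ M) :
    ∀ z ∈ Metric.ball (0 : ℂ) 1, ‖u z‖ * ‖γ‖ ≤ M := by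
  have hM0 : 0 ≤ M := le_trans (norm_nonneg ((0:ℂ) * deriv u 0 + γ * u 0)) (hv 0 (by simp))
  intro z hz
  rw [mem_ball_zero_iff] at hz
  set r : ℝ := (‖z‖ + 1) / 2 with hr
  have hr0 : 0 < r := by positivity
  have hr1 : r < 1 := by rw [hr]; linarith
  have hzr : ‖z‖ < r := by rw [hr]; linarith
  have hsub : closedBall (0 : ℂ) r ⊆ ball 0 1 := closedBall_subset_ball hr1
  have hcont : ContinuousOn (fun w => ‖u w‖) (closedBall (0 : ℂ) r) :=
    ((hu.continuousOn).mono hsub).norm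
  obtain ⟨z₀, hz₀K, hmax⟩ := (isCompact_closedBall (0 : ℂ) r).exists_isMaxOn
    ⟨0, by simp [hr0.le]⟩ hcont
  have hmax' : ∀ w ∈ closedBall (0 : ℂ) r, ‖u w‖ ≤ ‖u z₀‖ := fun w hw => hmax hw
  -- move the max point to the boundary
  have hdc : DiffContOnCl ℂ u (ball (0 : ℂ) r) := by
    apply DifferentiableOn.diffContOnCl
    rw [closure_ball (0 : ℂ) hr0.ne']
    exact (hu.differentiableOn).mono hsub
  obtain ⟨z₁, hz₁r, hmax₁⟩ : ∃ z₁, ‖z₁‖ = r ∧ ∀ w ∈ closedBall (0 : ℂ) r, ‖u w‖ ≤ ‖u z₁‖ := by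
    rcases eq_or_lt_of_le (mem_closedBall_zero_iff.mp hz₀K) with h | h
    · exact ⟨z₀, h, hmax'⟩
    · have hconst := Complex.norm_eqOn_closure_of_isPreconnected_of_isMaxOn
        (convex_ball (0 : ℂ) r).isPreconnected isOpen_ball hdc (mem_ball_zero_iff.mpr h)
        (fun w hw => hmax' w (ball_subset_closedBall hw))
      refine ⟨(r : ℂ), by simp [abs_of_pos hr0], fun w hw => ?_⟩
      have h1 : ‖u ((r : ℝ) : ℂ)‖ = ‖u z₀‖ := by
        have : ((r : ℝ) : ℂ) ∈ closure (ball (0 : ℂ) r) := by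
          rw [closure_ball (0 : ℂ) hr0.ne']
          simp [abs_of_pos hr0]
        simpa using hconst this
      rw [h1]; exact hmax' w hw
  have hz₁b : z₁ ∈ ball (0 : ℂ) 1 := by rw [mem_ball_zero_iff, hz₁r]; exact hr1
  set c := u z₁ with hc
  have key : ‖c‖ * ‖γ‖ ≤ M := by
    rcases eq_or_ne c 0 with hc0 | hc0
    · rw [hc0]; simpa using hM0
    -- boundary point analysis
    · have hud : HasDerivAt u (deriv u z₁) z₁ :=
        ((hu z₁ hz₁b).differentiableAt).hasDerivAt
      set d := deriv u z₁ with hd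
      set w : ℂ := (starRingEnd ℂ) c * (z₁ * d) with hw
      -- angular direction
      have hang : w.im = 0 := by
        have hcurve : HasDerivAt (fun θ : ℝ => z₁ * Complex.exp (θ * Complex.I))
            (z₁ * Complex.I) 0 := by
          have h1 : HasDerivAt (fun θ : ℝ => (θ : ℂ)) 1 0 :=
            Complex.ofRealCLM.hasDerivAt
          have h2 := (h1.mul_const Complex.I).cexp
          have h3 := h2.const_mul z₁
          simpa using h3
        have hA : HasDerivAt (fun θ : ℝ => Complex.normSq (u (z₁ * Complex.exp (θ * Complex.I))))
            (2 * ((starRingEnd ℂ) c * ((z₁ * Complex.I) * d)).re) 0 := by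
          have := aux_normSq_deriv (aux_comp_curve hud hcurve (by simp))
          simpa [mul_comm, mul_assoc] using this
        have hlocmax : IsLocalMax
            (fun θ : ℝ => Complex.normSq (u (z₁ * Complex.exp (θ * Complex.I)))) 0 := by
          apply Filter.Eventually.of_forall
          intro θ
          simp only
          have hmem : z₁ * Complex.exp (θ * Complex.I) ∈ closedBall (0 : ℂ) r := by
            rw [mem_closedBall_zero_iff, norm_mul,
              Complex.norm_exp_ofReal_mul_I, mul_one, hz₁r]
          have := hmax₁ _ hmem
          have h4 : Complex.normSq (u (z₁ * Complex.exp (θ * Complex.I))) ≤ Complex.normSq c := by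
            rw [← Complex.sq_norm, ← Complex.sq_norm]
            apply pow_le_pow_left₀ (by positivity) (by simpa using this)
          simpa using h4
        have := hlocmax.hasDerivAt_eq_zero hA
        have h5 : ((starRingEnd ℂ) c * ((z₁ * Complex.I) * d)).re = 0 := by linarith [this]
        have h6 : (starRingEnd ℂ) c * ((z₁ * Complex.I) * d) = Complex.I * w := by
          rw [hw]; ring
        rw [h6] at h5
        simpa [Complex.mul_re, Complex.I_re, Complex.I_im] using h5
      -- radial direction
      have hrad : 0 ≤ w.re := by
        have hcurve : HasDerivAt (fun t : ℝ => (t : ℂ) * z₁) z₁ 1 := by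
          simpa using (Complex.ofRealCLM.hasDerivAt (x := (1:ℝ))).mul_const z₁
        have hB : HasDerivAt (fun t : ℝ => Complex.normSq (u ((t : ℂ) * z₁)))
            (2 * w.re) 1 := by
          have h12 := aux_normSq_deriv (aux_comp_curve hud hcurve (by simp))
          have h13 : (((1:ℝ) : ℂ)) * z₁ = z₁ := by norm_num
          rw [h13] at h12
          have h14 : ((starRingEnd ℂ) (u z₁) * (z₁ * d)).re = w.re := by rw [hw]
          rw [h14] at h12
          exact h12
        rw [hasDerivAt_iff_tendsto_slope] at hB
        have hmono : 𝓝[<] (1 : ℝ) ≤ 𝓝[≠] (1 : ℝ) :=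
          nhdsWithin_mono _ (fun x hx => ne_of_lt hx)
        have hB' := hB.mono_left hmono
        have hev : ∀ᶠ t in 𝓝[<] (1 : ℝ),
            0 ≤ slope (fun t : ℝ => Complex.normSq (u ((t : ℂ) * z₁))) 1 t := by
          filter_upwards [Ioo_mem_nhdsLT_of_mem (Set.mem_Ioc.mpr ⟨zero_lt_one, le_rfl⟩)]
            with t ht
          have ht0 : 0 < t := ht.1
          have ht1 : t < 1 := ht.2
          have hmem : (t : ℂ) * z₁ ∈ closedBall (0 : ℂ) r := by
            rw [mem_closedBall_zero_iff, norm_mul, Complex.norm_real, Real.norm_eq_abs,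
              abs_of_pos ht0, hz₁r]
            nlinarith
          have hle : Complex.normSq (u ((t : ℂ) * z₁)) ≤ Complex.normSq c := by
            rw [← Complex.sq_norm, ← Complex.sq_norm]
            apply pow_le_pow_left₀ (by positivity) (by simpa using hmax₁ _ hmem)
          rw [slope_def_field]
          have h7 : Complex.normSq (u (((1:ℝ) : ℂ) * z₁)) = Complex.normSq c := by norm_num [hc]
          apply div_nonneg_iff.mpr
          refine Or.inr ⟨?_, by linarith⟩
          rw [h7]; linarith
        have h8 : (0:ℝ) ≤ 2 * w.re := ge_of_tendsto hB' hev
        linarith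
      -- combine
      have hs : Complex.normSq c > 0 := Complex.normSq_pos.mpr hc0
      set s : ℝ := Complex.normSq c with hsdef
      have hkey1 : (starRingEnd ℂ) c * (z₁ * d + γ * c) = w + (s : ℂ) * γ := by
        rw [hw, hsdef]
        rw [Complex.normSq_eq_conj_mul_self]; ring
      have hnorm1 : ‖w + (s : ℂ) * γ‖ ≤ ‖c‖ * M := by
        rw [← hkey1, norm_mul]
        have : ‖(starRingEnd ℂ) c‖ = ‖c‖ := by simp
        rw [this]
        exact mul_le_mul_of_nonneg_left (hv z₁ hz₁b) (norm_nonneg _)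
      have hnorm2 : ‖γ‖ * s ≤ ‖w + (s : ℂ) * γ‖ := by
        have hsq : (‖γ‖ * s) ^ 2 ≤ ‖w + (s : ℂ) * γ‖ ^ 2 := by
          have e1 : ‖w + (s : ℂ) * γ‖ ^ 2 = Complex.normSq (w + (s : ℂ) * γ) := by
            rw [Complex.sq_norm]
          have e2 : ‖γ‖ ^ 2 = Complex.normSq γ := by
            rw [Complex.sq_norm]
          rw [e1, mul_pow, e2]
          simp only [Complex.normSq_apply, Complex.add_re, Complex.add_im, Complex.mul_re,
            Complex.mul_im, Complex.ofReal_re, Complex.ofReal_im]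
          rw [hang]
          nlinarith [hrad, hγ.le, hs.le, sq_nonneg (w.re + s * γ.re), sq_nonneg (s * γ.im),
            mul_nonneg (mul_nonneg hrad hs.le) hγ.le]
        have h2 := Real.sqrt_le_sqrt hsq
        rwa [Real.sqrt_sq (by positivity), Real.sqrt_sq (norm_nonneg _)] at h2
      have h10 : ‖γ‖ * s ≤ ‖c‖ * M := le_trans hnorm2 hnorm1
      have h11 : s = ‖c‖ * ‖c‖ := by
        rw [hsdef, Complex.normSq_eq_norm_sq, sq]
      have hc0' : 0 < ‖c‖ := norm_pos_iff.mpr hc0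
      rw [h11] at h10
      refine le_of_mul_le_mul_left ?_ hc0'
      calc ‖c‖ * (‖c‖ * ‖γ‖) = ‖γ‖ * (‖c‖ * ‖c‖) := by ring
        _ ≤ ‖c‖ * M := h10
  calc ‖u z‖ * ‖γ‖ ≤ ‖c‖ * ‖γ‖ := by
        apply mul_le_mul_of_nonneg_right _ (norm_nonneg _)
        exact hmax₁ z (mem_closedBall_zero_iff.mpr hzr.le)
    _ ≤ M := key

-- Step A: remove the z^N factor by the maximum principle
lemma aux_maxmod {v : ℂ → ℂ} (hv : AnalyticOnNhd ℂ v (Metric.ball 0 1)) (N : ℕ) {M : ℝ}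
    (hb : ∀ z ∈ Metric.ball (0 : ℂ) 1, ‖z‖ ^ N * ‖v z‖ ≤ M) :
    ∀ z ∈ Metric.ball (0 : ℂ) 1, ‖v z‖ ≤ M := by
  intro z hz
  rw [mem_ball_zero_iff] at hz
  have key : ∀ r ∈ Set.Ioo ‖z‖ 1, ‖v z‖ ≤ M / r ^ N := by
    intro r hr
    have hr0 : 0 < r := lt_of_le_of_lt (norm_nonneg z) hr.1
    have hdc : DiffContOnCl ℂ v (ball (0 : ℂ) r) := by
      apply DifferentiableOn.diffContOnCl
      rw [closure_ball (0 : ℂ) hr0.ne']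
      exact (hv.differentiableOn).mono (closedBall_subset_ball hr.2)
    refine Complex.norm_le_of_forall_mem_frontier_norm_le isBounded_ball hdc ?_ ?_
    · intro w hw
      rw [frontier_ball (0 : ℂ) hr0.ne'] at hw
      have hwr : ‖w‖ = r := by simpa using hw
      have hwb : w ∈ ball (0 : ℂ) 1 := by rw [mem_ball_zero_iff, hwr]; exact hr.2
      have := hb w hwb
      rw [hwr] at this
      rw [le_div_iff₀ (by positivity)]
      linarith [this]
    · rw [closure_ball (0 : ℂ) hr0.ne']
      exact mem_closedBall_zero_iff.mpr (le_of_lt hr.1)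
  have hlim : Filter.Tendsto (fun r : ℝ => M / r ^ N) (𝓝[<] (1 : ℝ)) (𝓝 (M / 1 ^ N)) := by
    apply Filter.Tendsto.mono_left _ nhdsWithin_le_nhds
    exact (tendsto_const_nhds.div ((continuous_pow N).tendsto 1) (by norm_num))
  have hev : ∀ᶠ r in 𝓝[<] (1 : ℝ), ‖v z‖ ≤ M / r ^ N := by
    filter_upwards [Ioo_mem_nhdsLT_of_mem (Set.mem_Ioc.mpr ⟨hz, le_rfl⟩)] with r hr
    exact key r hr
  have := ge_of_tendsto hlim hev
  simpa using this

-- L1: factor out z^k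
lemma aux_fac : ∀ (k : ℕ) (w : ℂ → ℂ) (p : FormalMultilinearSeries ℂ ℂ ℂ),
    AnalyticOnNhd ℂ w (Metric.ball 0 1) → HasFPowerSeriesAt w p 0 →
    (∀ j, j < k → p.coeff j = 0) →
    ∃ u, AnalyticOnNhd ℂ u (Metric.ball 0 1) ∧ ∀ z ∈ Metric.ball (0 : ℂ) 1, w z = z ^ k * u z := by
  intro k
  induction k with
  | zero => exact fun w p hw _ _ => ⟨w, hw, fun z _ => by simp⟩
  | succ k ih =>
    intro w p hw hp hc
    have hw0 : w 0 = 0 := by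
      have h2 : p.coeff 0 = w 0 := hp.coeff_zero 1
      rw [hc 0 (Nat.succ_pos k)] at h2
      exact h2.symm
    set w₁ := dslope w 0 with hw₁
    have hps : HasFPowerSeriesAt w₁ p.fslope 0 := hp.has_fpower_series_dslope_fslope
    have hw₁a : AnalyticOnNhd ℂ w₁ (Metric.ball 0 1) := by
      intro z hzb
      rcases eq_or_ne z 0 with rfl | hz0
      · exact hps.analyticAt
      · have h1 : AnalyticAt ℂ (fun y => y⁻¹ * (w y - w 0)) z := by
          exact ((analyticAt_id.inv hz0)).mul ((hw z hzb).sub analyticAt_const)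
        apply h1.congr
        filter_upwards [isOpen_ne.mem_nhds (x := z) hz0] with y hy
        rw [hw₁, dslope_of_ne w hy, slope_def_field]
        simp [div_eq_inv_mul]
    have hfac : ∀ z : ℂ, w z = z * w₁ z := by
      intro z
      have := sub_smul_dslope w 0 z
      simp only [sub_zero, smul_eq_mul, hw0] at this
      rw [hw₁]; exact this.symm
    have hcoe : ∀ j, j < k → p.fslope.coeff j = 0 := by
      intro j hj
      rw [FormalMultilinearSeries.coeff_fslope]
      exact hc (j + 1) (by omega)
    obtain ⟨u, hu, hufac⟩ := ih w₁ p.fslope hw₁a hps hcoe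
    refine ⟨u, hu, fun z hzb => ?_⟩
    rw [hfac z, hufac z hzb]
    ring


set_option maxHeartbeats 1000000 in
/-- Corollary 5 (Corollary 1): If `f ∈ A_n` and
`|z² f'''(z) + (2-β) z f''(z)| < (1-α) n |n+1-β| / (n+1-α)` on `U` for
`0 ≤ α < 1` and complex `β` with `Re β < n+1`, then `|z f''(z)/f'(z)| < 1-α`
on `U`; in particular `Re (1 + z f''(z)/f'(z)) > α`, i.e. `f` is convex of order `α`. -/
theorem stmt_3 (n : ℕ) (hn : 1 ≤ n) (f : ℂ → ℂ)
    (hf : AnalyticOn ℂ f (Metric.ball 0 1))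
    (hf0 : f 0 = 0) (hf1 : deriv f 0 = 1)
    (hcoef : ∀ k : ℕ, 2 ≤ k → k ≤ n → iteratedDeriv k f 0 = 0)
    (α : ℝ) (hα0 : 0 ≤ α) (hα1 : α < 1) (β : ℂ) (hβ : β.re < n + 1)
    (h : ∀ z ∈ Metric.ball (0 : ℂ) 1,
      ‖z ^ 2 * deriv (deriv (deriv f)) z + (2 - β) * (z * deriv (deriv f) z)‖ <
        (1 - α) * n * ‖(n : ℂ) + 1 - β‖ / (n + 1 - α)) :
    ∀ z ∈ Metric.ball (0 : ℂ) 1,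
      deriv f z ≠ 0 ∧ ‖z * deriv (deriv f) z / deriv f z‖ < 1 - α ∧
        α < (1 + z * deriv (deriv f) z / deriv f z).re := by
  obtain ⟨m, rfl⟩ : ∃ m, n = m + 1 := ⟨n - 1, (Nat.succ_pred_eq_of_pos hn).symm⟩
  have hfN : AnalyticOnNhd ℂ f (Metric.ball 0 1) :=
    (Metric.isOpen_ball).analyticOn_iff_analyticOnNhd.mp hf
  set F2 : ℂ → ℂ := deriv (deriv f) with hF2def
  have hF2a : AnalyticOnNhd ℂ F2 (Metric.ball 0 1) := hfN.deriv.deriv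
  -- power series of F2 at 0
  obtain ⟨q, hq⟩ := hF2a 0 (by simp)
  have hqc : ∀ j, j < m → q.coeff j = 0 := by
    intro j hj
    obtain ⟨rq, hrq⟩ := hq
    have h1 : (Nat.factorial j : ℂ) * q.coeff j = iteratedDeriv j F2 0 := by
      have := hrq.factorial_smul (1 : ℂ) j
      rw [iteratedDeriv_eq_iteratedFDeriv]
      rw [← this, nsmul_eq_mul]
      rfl
    have h2 : iteratedDeriv j F2 0 = iteratedDeriv (j + 2) f 0 := by
      rw [hF2def, show j + 2 = (j + 1) + 1 from rfl, iteratedDeriv_succ', iteratedDeriv_succ']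
    have h3 : iteratedDeriv (j + 2) f 0 = 0 := hcoef (j + 2) (by omega) (by omega)
    rw [h2, h3] at h1
    have h4 : (Nat.factorial j : ℂ) ≠ 0 :=
      Nat.cast_ne_zero.mpr (Nat.factorial_ne_zero j)
    exact (mul_eq_zero.mp h1).resolve_left h4
  obtain ⟨u, hu, huf⟩ := aux_fac m F2 q hF2a hq hqc
  -- the constant γ
  set γ : ℂ := ((m + 1 : ℕ) : ℂ) + 1 - β with hγdef
  have hγre : 0 < γ.re := by
    rw [hγdef]
    simp only [Complex.sub_re, Complex.add_re, Complex.natCast_re, Complex.one_re]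
    push_cast at hβ ⊢
    linarith
  have hγne : γ ≠ 0 := fun hh => by rw [hh] at hγre; simp at hγre
  have hγpos : 0 < ‖γ‖ := norm_pos_iff.mpr hγne
  -- constants
  set Nr : ℝ := ((m + 1 : ℕ) : ℝ) with hNr
  have hNr1 : 1 ≤ Nr := by rw [hNr]; exact_mod_cast Nat.succ_le_succ (Nat.zero_le m)
  have hNr0 : 0 < Nr := lt_of_lt_of_le zero_lt_one hNr1
  set D : ℝ := Nr + 1 - α with hD
  have hD0 : 0 < D := by rw [hD]; linarith
  set K : ℝ := (1 - α) * Nr / D with hK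
  have hK0 : 0 < K := by
    rw [hK]
    exact div_pos (by nlinarith) hD0
  set M : ℝ := (1 - α) * Nr * ‖γ‖ / D with hM
  have hMK : M = K * ‖γ‖ := by rw [hM, hK]; field_simp
  -- derivative of F2 in terms of u
  have hudiff : ∀ z ∈ Metric.ball (0 : ℂ) 1, HasDerivAt u (deriv u z) z := fun z hz =>
    ((hu z hz).differentiableAt).hasDerivAt
  have hderiv2 : ∀ z ∈ Metric.ball (0 : ℂ) 1,
      deriv F2 z = (m : ℂ) * z ^ (m - 1) * u z + z ^ m * deriv u z := by
    intro z hz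
    have hev : F2 =ᶠ[nhds z] fun w => w ^ m * u w := by
      filter_upwards [Metric.isOpen_ball.mem_nhds hz] with y hy
      exact huf y hy
    rw [hev.deriv_eq]
    exact ((hasDerivAt_pow m z).mul (hudiff z hz)).deriv
  -- the hypothesis in terms of u
  have hexpr : ∀ z ∈ Metric.ball (0 : ℂ) 1,
      z ^ 2 * deriv F2 z + (2 - β) * (z * F2 z) =
        z ^ (m + 1) * (z * deriv u z + γ * u z) := by
    intro z hz
    rw [hderiv2 z hz, huf z hz, hγdef]
    cases m with
    | zero => push_cast; ring_nf
    | succ k =>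
      rw [Nat.succ_sub_one]
      push_cast
      ring
  -- bound on v
  have hva : AnalyticOnNhd ℂ (fun z => z * deriv u z + γ * u z) (Metric.ball 0 1) := by
    apply AnalyticOnNhd.add
    · exact (analyticOnNhd_id).mul hu.deriv
    · exact (analyticOnNhd_const).mul hu
  have hvb : ∀ z ∈ Metric.ball (0 : ℂ) 1,
      ‖z‖ ^ (m + 1) * ‖z * deriv u z + γ * u z‖ ≤ M := by
    intro z hz
    have h1 := h z hz
    rw [hexpr z hz] at h1
    have h2 : ‖z ^ (m + 1) * (z * deriv u z + γ * u z)‖ =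
        ‖z‖ ^ (m + 1) * ‖z * deriv u z + γ * u z‖ := by
      rw [norm_mul, norm_pow]
    rw [h2] at h1
    exact le_of_lt h1
  have hvle := aux_maxmod hva (m + 1) hvb
  have hule := aux_jack hu hγre hvle
  -- ‖u z‖ ≤ K on the ball
  have huK : ∀ z ∈ Metric.ball (0 : ℂ) 1, ‖u z‖ ≤ K := by
    intro z hz
    have h1 := hule z hz
    rw [hMK] at h1
    have h2 : ‖γ‖ = ‖γ‖ := rfl
    rw [h2] at h1
    exact le_of_mul_le_mul_right (by linarith [h1]) hγpos
  -- FTC bound on deriv f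
  have hftc : ∀ z ∈ Metric.ball (0 : ℂ) 1, Nr * ‖deriv f z - 1‖ ≤ K * ‖z‖ ^ (m + 1) := by
    intro z hz
    rw [mem_ball_zero_iff] at hz
    have hmem : ∀ t : ℝ, t ∈ Set.Icc (0:ℝ) 1 → ((t : ℂ) * z) ∈ Metric.ball (0 : ℂ) 1 := by
      intro t ht
      rw [mem_ball_zero_iff, norm_mul, Complex.norm_real, Real.norm_eq_abs,
        _root_.abs_of_nonneg ht.1]
      nlinarith [norm_nonneg z, ht.2, hz]
    have hcurve : ∀ t : ℝ, HasDerivAt (fun s : ℝ => (s : ℂ) * z) z t := fun t => by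
      simpa using (Complex.ofRealCLM.hasDerivAt (x := t)).mul_const z
    have hder : ∀ t ∈ Set.uIcc (0:ℝ) 1,
        HasDerivAt (fun s : ℝ => deriv f ((s : ℂ) * z)) (z * F2 ((t : ℂ) * z)) t := by
      intro t ht
      rw [Set.uIcc_of_le zero_le_one] at ht
      have hF1d : HasDerivAt (deriv f) (F2 ((t : ℂ) * z)) ((t : ℂ) * z) :=
        ((hfN.deriv _ (hmem t ht)).differentiableAt).hasDerivAt
      exact aux_comp_curve hF1d (hcurve t) rfl
    have hcont : ContinuousOn (fun t : ℝ => z * F2 ((t : ℂ) * z)) (Set.uIcc (0:ℝ) 1) := by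
      apply ContinuousOn.mul continuousOn_const
      apply (hF2a.continuousOn).comp
      · exact (Complex.continuous_ofReal.mul continuous_const).continuousOn
      · intro t ht
        rw [Set.uIcc_of_le zero_le_one] at ht
        exact hmem t ht
    have hint : IntervalIntegrable (fun t : ℝ => z * F2 ((t : ℂ) * z))
        MeasureTheory.volume 0 1 := hcont.intervalIntegrable
    have heq := intervalIntegral.integral_eq_sub_of_hasDerivAt hder hint
    have heq2 : ∫ t in (0:ℝ)..1, z * F2 ((t : ℂ) * z) = deriv f z - 1 := by
      rw [heq]
      norm_num [hf1]
    have hbound : ‖∫ t in (0:ℝ)..1, z * F2 ((t : ℂ) * z)‖ ≤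
        |∫ t in (0:ℝ)..1, K * ‖z‖ ^ (m + 1) * t ^ m| := by
      apply intervalIntegral.norm_integral_le_abs_of_norm_le
      · apply MeasureTheory.ae_restrict_of_forall_mem measurableSet_uIoc
        intro t ht
        rw [Set.uIoc_of_le zero_le_one] at ht
        have ht' : t ∈ Set.Icc (0:ℝ) 1 := ⟨le_of_lt ht.1, ht.2⟩
        have hmem' := hmem t ht'
        rw [norm_mul, huf _ hmem', norm_mul, norm_pow, norm_mul, Complex.norm_real,
          Real.norm_eq_abs, _root_.abs_of_nonneg (le_of_lt ht.1)]
        have h5 := huK _ hmem'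
        have h6 : (t * ‖z‖) ^ m ≤ t ^ m * ‖z‖ ^ m := by rw [mul_pow]
        calc ‖z‖ * ((t * ‖z‖) ^ m * ‖u ((t:ℂ) * z)‖)
            ≤ ‖z‖ * ((t * ‖z‖) ^ m * K) := by
              apply mul_le_mul_of_nonneg_left _ (norm_nonneg z)
              exact mul_le_mul_of_nonneg_left h5
                (pow_nonneg (mul_nonneg (le_of_lt ht.1) (norm_nonneg z)) m)
          _ = K * ‖z‖ ^ (m + 1) * t ^ m := by rw [mul_pow]; ring
      · exact ((continuous_const.mul (continuous_pow m)).continuousOn).intervalIntegrable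
    have hval0 : ∫ t in (0:ℝ)..1, K * ‖z‖ ^ (m + 1) * t ^ m =
        K * ‖z‖ ^ (m + 1) / Nr := by
      rw [intervalIntegral.integral_const_mul, integral_pow]
      rw [hNr]
      push_cast
      ring
    have hval : |∫ t in (0:ℝ)..1, K * ‖z‖ ^ (m + 1) * t ^ m| =
        K * ‖z‖ ^ (m + 1) / Nr := by
      rw [hval0]
      exact _root_.abs_of_nonneg (by positivity)
    rw [heq2] at hbound
    rw [hval] at hbound
    rw [mul_comm]
    calc ‖deriv f z - 1‖ * Nr ≤ (K * ‖z‖ ^ (m + 1) / Nr) * Nr := by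
          apply mul_le_mul_of_nonneg_right hbound (le_of_lt hNr0)
      _ = K * ‖z‖ ^ (m + 1) := by field_simp
  -- final assembly
  intro z hz
  have hzn := mem_ball_zero_iff.mp hz
  set X : ℝ := ‖z‖ ^ (m + 1) with hX
  have hX0 : 0 ≤ X := by positivity
  have hX1 : X < 1 := pow_lt_one₀ (norm_nonneg z) hzn (Nat.succ_ne_zero m)
  set a : ℂ := z * F2 z with ha
  set b : ℂ := deriv f z with hb
  have haK : ‖a‖ ≤ K * X := by
    rw [ha, huf z hz, hX]
    rw [norm_mul, norm_mul, norm_pow]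
    calc ‖z‖ * (‖z‖ ^ m * ‖u z‖) ≤ ‖z‖ * (‖z‖ ^ m * K) := by
          apply mul_le_mul_of_nonneg_left _ (norm_nonneg z)
          exact mul_le_mul_of_nonneg_left (huK z hz) (by positivity)
      _ = K * ‖z‖ ^ (m + 1) := by ring
  have hbb := hftc z hz
  have hb1 : 1 - ‖b - 1‖ ≤ ‖b‖ := by
    have h7 : ‖(1:ℂ)‖ - ‖b‖ ≤ ‖(1:ℂ) - b‖ := norm_sub_norm_le 1 b
    rw [norm_one, norm_sub_rev] at h7
    linarith
  have hKD : K * D = (1 - α) * Nr := by rw [hK]; field_simp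
  have hNb : Nr - K * X ≤ Nr * ‖b‖ := by
    have h8 : Nr * (1 - ‖b - 1‖) ≤ Nr * ‖b‖ := mul_le_mul_of_nonneg_left hb1 (le_of_lt hNr0)
    nlinarith [hbb]
  have hbpos : 0 < ‖b‖ := by
    have h9 : K * X < Nr := by nlinarith [mul_lt_mul_of_pos_left hX1 hK0, hKD]
    nlinarith
  have hbne : b ≠ 0 := norm_pos_iff.mp hbpos
  have hmain : ‖a‖ < (1 - α) * ‖b‖ := by
    have h1α : (0:ℝ) < 1 - α := by linarith
    have hprod : K * D * X < K * D := mul_lt_of_lt_one_right (mul_pos hK0 hD0) hX1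
    have e1 : (1 - α) * (Nr - K * X) ≤ (1 - α) * (Nr * ‖b‖) :=
      mul_le_mul_of_nonneg_left hNb h1α.le
    have e2 : Nr * ‖a‖ ≤ Nr * (K * X) := mul_le_mul_of_nonneg_left haK hNr0.le
    have hprod' : K * X * (Nr + 1 - α) < (1 - α) * Nr := by
      calc K * X * (Nr + 1 - α) = K * D * X := by rw [hD]; ring
        _ < K * D := hprod
        _ = (1 - α) * Nr := hKD
    have e3 : Nr * ‖a‖ < Nr * ((1 - α) * ‖b‖) := by nlinarith [hprod', e1, e2]
    exact lt_of_mul_lt_mul_left e3 hNr0.le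
  have habs : ‖a / b‖ < 1 - α := by
    rw [norm_div]
    rw [div_lt_iff₀ (by exact hbpos)]
    exact hmain
  refine ⟨hbne, habs, ?_⟩
  have hre : -(‖a / b‖) ≤ (a / b).re :=
    (abs_le.mp (Complex.abs_re_le_norm (a / b))).1
  have : (1 + a / b).re = 1 + (a / b).re := by simp
  rw [this]
  linarith
end

section
/- For integer n ≥ 1, real 0 ≤ α < 1, and complex β with Re(β) < n+1, the function f(z) = z + ((1−α)/(n+1−α))·z^{n+1} satisfies |z·f''(z) − β·(f'(z) − f(z)/z)| < (1−α)·n·|n+1−β|/(n+1−α) for all z in the unit disk U, and consequently |z·f'(z)/f(z) − 1| < 1−α on U, so f is starlike of order α. -/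
/-- Example 6 (Example 1): the function `f(z) = z + ((1-α)/(n+1-α)) z^(n+1)`
satisfies the hypothesis of Theorem 1, and hence is starlike of order `α`. -/
theorem stmt_4 (n : ℕ) (hn : 1 ≤ n) (α : ℝ) (hα0 : 0 ≤ α) (hα1 : α < 1)
    (β : ℂ) (hβ : β.re < n + 1)
    (f : ℂ → ℂ) (hf : f = fun z => z + (((1 - α) / (n + 1 - α) : ℝ) : ℂ) * z ^ (n + 1)) :
    (∀ z ∈ Metric.ball (0 : ℂ) 1, z ≠ 0 →
      ‖z * deriv (deriv f) z - β * (deriv f z - f z / z)‖ <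
        (1 - α) * n * ‖(n : ℂ) + 1 - β‖ / (n + 1 - α)) ∧
    (∀ z ∈ Metric.ball (0 : ℂ) 1, z ≠ 0 →
      f z ≠ 0 ∧ ‖z * deriv f z / f z - 1‖ < 1 - α ∧
        α < (z * deriv f z / f z).re) := by
  have hn1 : (1:ℝ) ≤ n := by exact_mod_cast hn
  have h1α : (0:ℝ) < 1 - α := by linarith
  have hden : (0:ℝ) < n + 1 - α := by linarith
  set c : ℝ := (1 - α) / (n + 1 - α) with hc
  have hc0 : 0 < c := div_pos h1α hden
  have hc1 : c < 1 := by
    rw [hc, div_lt_one hden]; linarith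
  have hceq : c * (n + 1 - α) = 1 - α := by
    rw [hc]; field_simp
  have hβne : ((n:ℂ) + 1 - β) ≠ 0 := by
    intro h
    have := congrArg Complex.re h
    simp [Complex.sub_re, Complex.add_re] at this
    linarith
  have hβpos : 0 < ‖(n:ℂ) + 1 - β‖ := norm_pos_iff.mpr hβne
  have hn' : n - 1 + 1 = n := Nat.succ_pred_eq_of_pos hn
  have hderiv : deriv f = fun z => 1 + (c:ℂ) * (n+1) * z ^ n := by
    funext z
    rw [hf]
    have h1 : HasDerivAt (fun z : ℂ => z + (c:ℂ) * z ^ (n+1))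
        (1 + (c:ℂ) * (n+1) * z ^ n) z := by
      have h2 := ((hasDerivAt_pow (n+1) z).const_mul ((c:ℂ))).const_add 0
      have h3 := (hasDerivAt_id z).add ((hasDerivAt_pow (n+1) z).const_mul ((c:ℂ)))
      refine h3.congr_deriv ?_
      push_cast
      ring
    exact h1.deriv
  have hderiv2 : ∀ z : ℂ, deriv (deriv f) z = (c:ℂ) * (n+1) * (n * z ^ (n-1)) := by
    intro z
    rw [hderiv]
    have h3 : HasDerivAt (fun z : ℂ => 1 + (c:ℂ) * (n+1) * z ^ n)
        ((c:ℂ) * (n+1) * (n * z ^ (n-1))) z := by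
      have := ((hasDerivAt_pow n z).const_mul ((c:ℂ) * (n+1))).const_add 1
      convert this using 1
      all_goals (push_cast; ring)
    exact h3.deriv
  constructor
  · intro z hz hz0
    have hz1 : ‖z‖ < 1 := by simpa using Metric.mem_ball.mp hz
    have hzn : ‖z‖ ^ n < 1 :=
      pow_lt_one₀ (norm_nonneg z) hz1 (by omega)
    have e1 : (z:ℂ) ^ (n-1) * z = z ^ n := by
      rw [← pow_succ, hn']
    have key : z * deriv (deriv f) z - β * (deriv f z - f z / z)
        = (c:ℂ) * n * z ^ n * ((n:ℂ) + 1 - β) := by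
      rw [hderiv2 z, hderiv, hf]
      simp only
      have e2 : (z + (c:ℂ) * z ^ (n+1)) / z = 1 + (c:ℂ) * z ^ n := by
        rw [pow_succ]
        field_simp
      rw [e2]
      rw [show z * ((c:ℂ) * (n+1) * (n * z ^ (n-1))) = (c:ℂ) * (n+1) * (n * (z ^ (n-1) * z)) by ring, e1]
      ring
    rw [key]
    have habs : ‖(c:ℂ) * n * z ^ n * ((n:ℂ) + 1 - β)‖
        = c * n * ‖z‖ ^ n * ‖(n:ℂ) + 1 - β‖ := by
      simp [norm_mul, norm_pow, Complex.norm_real, abs_of_pos hc0]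
    rw [habs]
    have hRHS : (1 - α) * n * ‖(n:ℂ) + 1 - β‖ / (n + 1 - α)
        = c * n * ‖(n:ℂ) + 1 - β‖ := by
      rw [hc]; field_simp; try ring
    rw [hRHS]
    have hnpos : (0:ℝ) < n := by linarith
    have hA : 0 < c * n * ‖(n:ℂ) + 1 - β‖ := by positivity
    calc c * n * ‖z‖ ^ n * ‖(n:ℂ) + 1 - β‖
        = (c * n * ‖(n:ℂ) + 1 - β‖) * ‖z‖ ^ n := by ring
      _ < (c * n * ‖(n:ℂ) + 1 - β‖) * 1 := by
          exact mul_lt_mul_of_pos_left hzn hA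
      _ = c * n * ‖(n:ℂ) + 1 - β‖ := by ring
  · intro z hz hz0
    have hz1 : ‖z‖ < 1 := by simpa using Metric.mem_ball.mp hz
    have hzn : ‖z‖ ^ n < 1 :=
      pow_lt_one₀ (norm_nonneg z) hz1 (by omega)
    set t : ℝ := c * ‖z‖ ^ n with ht
    have htc : t < c := by
      rw [ht]
      nlinarith
    have ht0 : 0 ≤ t := by positivity
    have ht1 : t < 1 := lt_trans htc hc1
    have hw : ‖(c:ℂ) * z ^ n‖ = t := by
      simp [ht, norm_mul, norm_pow, Complex.norm_real, abs_of_pos hc0]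
    have hD : 1 - t ≤ ‖1 + (c:ℂ) * z ^ n‖ := by
      have := norm_sub_norm_le (1:ℂ) (-((c:ℂ) * z ^ n))
      simp only [norm_neg, norm_one, sub_neg_eq_add] at this
      rw [hw] at this
      linarith
    have hDpos : 0 < ‖1 + (c:ℂ) * z ^ n‖ := by linarith
    have hone : (1:ℂ) + (c:ℂ) * z ^ n ≠ 0 := by
      intro h; rw [h] at hDpos; simp at hDpos
    have hfz : f z = z * (1 + (c:ℂ) * z ^ n) := by
      rw [hf]; simp only; rw [pow_succ]; ring
    have hfne : f z ≠ 0 := by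
      rw [hfz]; exact mul_ne_zero hz0 hone
    refine ⟨hfne, ?_, ?_⟩
    · have key2 : z * deriv f z / f z - 1 = (c:ℂ) * n * z ^ n / (1 + (c:ℂ) * z ^ n) := by
        rw [hderiv, hfz]
        simp only
        field_simp
        ring
      rw [key2]
      rw [norm_div]
      have hnum : ‖(c:ℂ) * n * z ^ n‖ = n * t := by
        simp [ht, norm_mul, norm_pow, Complex.norm_real, abs_of_pos hc0]
        ring
      rw [hnum]
      rw [div_lt_iff₀ hDpos]
      have h5 : (n:ℝ) * t < (1 - α) * (1 - t) := by
        have h6 : t * (n + 1 - α) < c * (n + 1 - α) := by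
          exact mul_lt_mul_of_pos_right htc hden
        rw [hceq] at h6
        nlinarith
      calc (n:ℝ) * t < (1 - α) * (1 - t) := h5
        _ ≤ (1 - α) * ‖1 + (c:ℂ) * z ^ n‖ := by
            exact mul_le_mul_of_nonneg_left hD (le_of_lt h1α)
    · have key2 : ‖z * deriv f z / f z - 1‖ < 1 - α := by
        have key2' : z * deriv f z / f z - 1 = (c:ℂ) * n * z ^ n / (1 + (c:ℂ) * z ^ n) := by
          rw [hderiv, hfz]
          simp only
          field_simp
          ring
        rw [key2', norm_div]
        have hnum : ‖(c:ℂ) * n * z ^ n‖ = n * t := by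
          simp [ht, norm_mul, norm_pow, Complex.norm_real, abs_of_pos hc0]
          ring
        rw [hnum, div_lt_iff₀ hDpos]
        have h5 : (n:ℝ) * t < (1 - α) * (1 - t) := by
          have h6 : t * (n + 1 - α) < c * (n + 1 - α) :=
            mul_lt_mul_of_pos_right htc hden
          rw [hceq] at h6
          nlinarith
        calc (n:ℝ) * t < (1 - α) * (1 - t) := h5
          _ ≤ (1 - α) * ‖1 + (c:ℂ) * z ^ n‖ :=
              mul_le_mul_of_nonneg_left hD (le_of_lt h1α)
      set w := z * deriv f z / f z with hwdef
      have h7 : |(w - 1).re| ≤ ‖w - 1‖ := Complex.abs_re_le_norm _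
      have h8 : (w - 1).re = w.re - 1 := by simp [Complex.sub_re, Complex.one_re]
      have h9 := neg_abs_le ((w - 1).re)
      rw [h8] at h9 h7
      linarith [abs_le.mp (le_of_lt (lt_of_le_of_lt h7 key2)) |>.1]
end

section
/- If f(z) = z + a_{n+1}z^{n+1} + ... is analytic in the open unit disk U, 0 ≤ α < 1 is real, β is a complex number with Re(β) < n, and |z·f''(z) − β·(f'(z) − 1)| < (1−α)·|n−β| for all z in U, then |f'(z) − 1| < 1−α for all z in U; in particular Re(f'(z)) > α. -/
open Metric Set Filter Function FormalMultilinearSeries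
open scoped Topology

/-- Derivative of `t ↦ normSq (ψ t)` for a real-differentiable curve `ψ : ℝ → ℂ`. -/
lemma aux_hasDerivAt_normSq {ψ : ℝ → ℂ} {a : ℂ} {t : ℝ} (hψ : HasDerivAt ψ a t) :
    HasDerivAt (fun s => Complex.normSq (ψ s))
      (2 * ((ψ t).re * a.re + (ψ t).im * a.im)) t := by
  have hre : HasDerivAt (fun s => (ψ s).re) a.re t :=
    Complex.reCLM.hasFDerivAt.comp_hasDerivAt t hψ
  have him : HasDerivAt (fun s => (ψ s).im) a.im t :=
    Complex.imCLM.hasFDerivAt.comp_hasDerivAt t hψ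
  have h2 : (fun s => Complex.normSq (ψ s))
      = fun s => (ψ s).re * (ψ s).re + (ψ s).im * (ψ s).im := by
    funext s; exact Complex.normSq_apply _
  rw [h2]
  refine HasDerivAt.congr_deriv ((hre.mul hre).add (him.mul him)) ?_
  ring

/-- Factor out a zero of order `n` at the origin, globally. -/
lemma aux_factor_pow {v : ℂ → ℂ} {n : ℕ}
    (hv : AnalyticOnNhd ℂ v (Metric.ball 0 1))
    (hd : ∀ k < n, iteratedDeriv k v 0 = 0) :
    ∃ G : ℂ → ℂ, AnalyticOnNhd ℂ G (Metric.ball 0 1) ∧ ∀ z, v z = z ^ n * G z := by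
  have h0 : (0:ℂ) ∈ Metric.ball (0:ℂ) 1 := by simp
  obtain ⟨p, hp⟩ := hv 0 h0
  have hcoeff : ∀ k < n, p.coeff k = 0 := by
    intro k hk
    obtain ⟨r, hpr⟩ := hp
    have h1 := hpr.factorial_smul (1 : ℂ) k
    have h2 : iteratedDeriv k v 0 = iteratedFDeriv ℂ k v 0 fun _ => (1:ℂ) :=
      iteratedDeriv_eq_iteratedFDeriv ..
    rw [← h2, hd k hk] at h1
    have h4 : (p k fun _ => (1:ℂ)) = 0 := by
      rcases smul_eq_zero.mp h1 with hbad | hgood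
      · exact absurd hbad (Nat.factorial_ne_zero k)
      · exact hgood
    have h5 : p.coeff k = p k fun _ => (1:ℂ) := by
      rfl
    rw [h5, h4]
  set u : ℕ → ℂ → ℂ := fun j => (swap dslope 0)^[j] v with hu_def
  have hu_series : ∀ j, HasFPowerSeriesAt (u j) (fslope^[j] p) 0 := fun j =>
    hp.has_fpower_series_iterate_dslope_fslope j
  have hu_succ : ∀ j, u (j + 1) = dslope (u j) 0 := by
    intro j; rw [hu_def]; simp only [iterate_succ_apply']
  have hu0 : ∀ j < n, u j 0 = 0 := by
    intro j hj
    have h1 : (fslope^[j] p).coeff 0 = u j 0 := (hu_series j).coeff_zero (fun _ => (1:ℂ))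
    rw [coeff_iterate_fslope] at h1
    rw [← h1, zero_add, hcoeff j hj]
  have hu_an : ∀ j, AnalyticOnNhd ℂ (u j) (Metric.ball 0 1) := by
    intro j
    induction j with
    | zero => exact hv
    | succ j ih =>
      intro x hx
      rw [hu_succ j]
      rcases eq_or_ne x 0 with rfl | hx0
      · exact (hu_succ j ▸ (hu_series (j + 1))).analyticAt
      · have hA : AnalyticAt ℂ (fun z => (u j z - u j 0) / (z - 0)) x := by
          apply AnalyticAt.div
          · exact (ih x hx).sub analyticAt_const
          · exact (analyticAt_id).sub analyticAt_const
          · simpa using hx0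
        apply hA.congr
        have hmem : {z : ℂ | z ≠ 0} ∈ 𝓝 x := isOpen_ne.mem_nhds hx0
        filter_upwards [hmem] with z hz
        rw [dslope_of_ne _ hz, slope_def_field]
  have hid : ∀ j, j ≤ n → ∀ z, v z = z ^ j * u j z := by
    intro j
    induction j with
    | zero => intro _ z; simp [hu_def]
    | succ j ih =>
      intro hj z
      have h1 := ih (Nat.le_of_succ_le hj) z
      have h2 : (z - 0) • dslope (u j) 0 z = u j z - u j 0 := sub_smul_dslope (u j) 0 z
      rw [hu0 j (Nat.lt_of_succ_le hj), sub_zero, sub_zero, smul_eq_mul] at h2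
      rw [h1, ← h2, ← hu_succ j]; ring
  exact ⟨u n, hu_an n, hid n le_rfl⟩

/-- Theorem 7 (Theorem 2): If `f ∈ A_n` and
`|z f''(z) - β (f'(z) - 1)| < (1-α) |n-β|` on `U` for `0 ≤ α < 1` and complex
`β` with `Re β < n`, then `|f'(z) - 1| < 1-α` on `U`; in particular `Re f'(z) > α`. -/
theorem stmt_5 (n : ℕ) (hn : 1 ≤ n) (f : ℂ → ℂ)
    (hf : AnalyticOn ℂ f (Metric.ball 0 1))
    (hf0 : f 0 = 0) (hf1 : deriv f 0 = 1)
    (hcoef : ∀ k : ℕ, 2 ≤ k → k ≤ n → iteratedDeriv k f 0 = 0)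
    (α : ℝ) (hα0 : 0 ≤ α) (hα1 : α < 1) (β : ℂ) (hβ : β.re < n)
    (h : ∀ z ∈ Metric.ball (0 : ℂ) 1,
      ‖z * deriv (deriv f) z - β * (deriv f z - 1)‖ <
        (1 - α) * ‖(n : ℂ) - β‖) :
    ∀ z ∈ Metric.ball (0 : ℂ) 1,
      ‖deriv f z - 1‖ < 1 - α ∧ α < (deriv f z).re := by
  set v : ℂ → ℂ := fun z => deriv f z - 1 with hv_def
  have hfN : AnalyticOnNhd ℂ f (Metric.ball 0 1) :=
    (Metric.isOpen_ball.analyticOn_iff_analyticOnNhd).mp hf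
  have hdf : AnalyticOnNhd ℂ (deriv f) (Metric.ball 0 1) := hfN.deriv
  have hvA : AnalyticOnNhd ℂ v (Metric.ball 0 1) := fun x hx =>
    (hdf x hx).sub analyticAt_const
  have hv0 : v 0 = 0 := by simp [hv_def, hf1]
  have hvderiv : ∀ z, deriv v z = deriv (deriv f) z := by
    intro z; rw [hv_def]; exact deriv_sub_const (1:ℂ)
  have hvd : ∀ k < n, iteratedDeriv k v 0 = 0 := by
    intro k hk
    cases k with
    | zero => simpa using hv0
    | succ m =>
      have e1 : iteratedDeriv (m + 1) v = iteratedDeriv (m + 1) (deriv f) := by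
        rw [iteratedDeriv_succ', iteratedDeriv_succ',
          show deriv v = deriv (deriv f) from funext hvderiv]
      rw [e1, ← iteratedDeriv_succ']
      exact hcoef (m + 2) (by omega) (by omega)
  have hα' : (0:ℝ) < 1 - α := by linarith
  -- the key claim
  have key : ∀ z ∈ Metric.ball (0:ℂ) 1, ‖v z‖ < 1 - α := by
    by_contra hcon
    push_neg at hcon
    obtain ⟨z1, hz1, hz1'⟩ := hcon
    set r1 := ‖z1‖ with hr1_def
    have hr1 : r1 < 1 := by
      simpa [Complex.dist_eq, hr1_def] using (mem_ball.mp hz1)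
    have hKsub : Metric.closedBall (0:ℂ) r1 ⊆ Metric.ball 0 1 :=
      Metric.closedBall_subset_ball hr1
    have hcont : ContinuousOn (fun z => ‖v z‖) (Metric.closedBall (0:ℂ) r1) :=
      continuous_norm.comp_continuousOn ((hvA.continuousOn).mono hKsub)
    have hz1mem : z1 ∈ Metric.closedBall (0:ℂ) r1 := by
      simp [Metric.mem_closedBall, Complex.dist_eq, hr1_def]
    obtain ⟨z0, hz0mem, hz0max⟩ :=
      (isCompact_closedBall (0:ℂ) r1).exists_isMaxOn ⟨z1, hz1mem⟩ hcont
    set ρ := ‖v z0‖ with hρ_def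
    have hρ1 : 1 - α ≤ ρ := le_trans hz1' (hz0max hz1mem)
    have hρpos : 0 < ρ := lt_of_lt_of_le hα' hρ1
    have hz00 : z0 ≠ 0 := by
      intro hz
      rw [hz] at hρ_def
      rw [hρ_def, hv0] at hρpos
      simp at hρpos
    set r := ‖z0‖ with hr_def
    have hr0 : 0 < r := by simpa [hr_def] using hz00
    have hrr1 : r ≤ r1 := by
      simpa [Complex.dist_eq, hr_def] using (Metric.mem_closedBall.mp hz0mem)
    have hrlt1 : r < 1 := lt_of_le_of_lt hrr1 hr1
    have hz0ball : z0 ∈ Metric.ball (0:ℂ) 1 := by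
      simp [Metric.mem_ball, Complex.dist_eq, ← hr_def, hrlt1]
    have hmax : ∀ z ∈ Metric.closedBall (0:ℂ) r1, ‖v z‖ ≤ ρ := fun z hz => hz0max hz
    -- factor v = z^n * G
    obtain ⟨G, hGA, hfac⟩ := aux_factor_pow hvA hvd
    -- bound G on the closed ball of radius r
    have hGb : ∀ z ∈ Metric.closedBall (0:ℂ) r, ‖G z‖ ≤ ρ / r ^ n := by
      have hrsub : Metric.closedBall (0:ℂ) r ⊆ Metric.ball 0 1 :=
        Metric.closedBall_subset_ball hrlt1
      have hdc : DiffContOnCl ℂ G (Metric.ball 0 r) := by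
        constructor
        · exact (hGA.differentiableOn).mono ((Metric.ball_subset_closedBall).trans hrsub)
        · rw [closure_ball (0:ℂ) hr0.ne']
          exact (hGA.continuousOn).mono hrsub
      intro z hz
      have hcl : z ∈ closure (Metric.ball (0:ℂ) r) := by
        rwa [closure_ball (0:ℂ) hr0.ne']
      refine Complex.norm_le_of_forall_mem_frontier_norm_le isBounded_ball hdc ?_ hcl
      intro w hw
      rw [frontier_ball (0:ℂ) hr0.ne'] at hw
      have hwr : ‖w‖ = r := by
        simpa [Complex.dist_eq] using (mem_sphere_iff_norm.mp hw)
      have hwmem : w ∈ Metric.closedBall (0:ℂ) r1 := by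
        simp [Metric.mem_closedBall, Complex.dist_eq, hwr, hrr1]
      have hvw := hmax w hwmem
      rw [hfac w] at hvw
      rw [norm_mul, norm_pow, hwr] at hvw
      have hrn : (0:ℝ) < r ^ n := pow_pos hr0 n
      rw [le_div_iff₀ hrn, mul_comm]
      exact hvw
    -- radial bound : |v (t z0)| ≤ ρ t^n for t ∈ [0,1]
    have hvb : ∀ t : ℝ, 0 ≤ t → t ≤ 1 →
        Complex.normSq (v ((t:ℂ) * z0)) ≤ ρ ^ 2 * t ^ (2 * n) := by
      intro t ht0 ht1
      have hmem : (t:ℂ) * z0 ∈ Metric.closedBall (0:ℂ) r := by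
        simp only [Metric.mem_closedBall, Complex.dist_eq, sub_zero, norm_mul,
          Complex.norm_real, Real.norm_eq_abs, ← hr_def]
        calc |t| * r ≤ 1 * r := by
              apply mul_le_mul_of_nonneg_right _ hr0.le
              rwa [abs_of_nonneg ht0]
          _ = r := one_mul r
      have h1 : ‖v ((t:ℂ) * z0)‖ ≤ ρ * t ^ n := by
        rw [hfac]
        rw [norm_mul, norm_pow, norm_mul, Complex.norm_real, Real.norm_eq_abs, abs_of_nonneg ht0, ← hr_def]
        calc (t * r) ^ n * ‖G ((t:ℂ) * z0)‖
            ≤ (t * r) ^ n * (ρ / r ^ n) := by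
              apply mul_le_mul_of_nonneg_left (hGb _ hmem)
              positivity
          _ = ρ * t ^ n * (r ^ n / r ^ n) := by ring
          _ = ρ * t ^ n := by
              rw [div_self (pow_pos hr0 n).ne']; ring
      have h2 : Complex.normSq (v ((t:ℂ) * z0)) = ‖v ((t:ℂ) * z0)‖ ^ 2 :=
        (Complex.sq_norm _).symm
      rw [h2]
      calc ‖v ((t:ℂ) * z0)‖ ^ 2 ≤ (ρ * t ^ n) ^ 2 := by
            exact pow_le_pow_left₀ (norm_nonneg _) h1 2
        _ = ρ ^ 2 * t ^ (2 * n) := by rw [mul_pow, ← pow_mul]; ring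
    -- derivative data
    have hda : HasDerivAt v (deriv v z0) z0 := ((hvA z0 hz0ball).differentiableAt).hasDerivAt
    set a := deriv v z0 with ha_def
    set c := (starRingEnd ℂ) (v z0) * (z0 * a) with hc_def
    -- the radial derivative inequality : c.re ≥ n ρ²
    have hγ : HasDerivAt (fun t : ℝ => (t:ℂ) * z0) z0 1 := by
      have := (Complex.ofRealCLM.hasDerivAt (x := (1:ℝ))).mul_const z0
      simpa using this
    have hψ : HasDerivAt (fun t : ℝ => v ((t:ℂ) * z0)) (z0 * a) 1 := by
      have hv1 : HasDerivAt v a (((1:ℝ):ℂ) * z0) := by simpa using hda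
      have := HasDerivAt.scomp (h := fun t : ℝ => (t:ℂ) * z0) (x := 1) hv1 hγ
      simp only [smul_eq_mul] at this; exact this
    have hψ1 : v (((1:ℝ):ℂ) * z0) = v z0 := by norm_num
    have hφ : HasDerivAt (fun t : ℝ => Complex.normSq (v ((t:ℂ) * z0)))
        (2 * ((v z0).re * (z0 * a).re + (v z0).im * (z0 * a).im)) 1 := by
      have := aux_hasDerivAt_normSq hψ
      rwa [hψ1] at this
    have hcre : (n : ℝ) * ρ ^ 2 ≤ c.re := by
      -- h t = ρ² t^{2n} - φ t has h(1) = 0, h ≥ 0 on (0,1), so h'(1) ≤ 0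
      have hpow : HasDerivAt (fun t : ℝ => ρ ^ 2 * t ^ (2 * n)) (ρ ^ 2 * (2 * n)) 1 := by
        have := (hasDerivAt_pow (2 * n) (1:ℝ)).const_mul (ρ ^ 2)
        simpa using this
      have hh : HasDerivAt (fun t : ℝ => ρ ^ 2 * t ^ (2 * n) - Complex.normSq (v ((t:ℂ) * z0)))
          (ρ ^ 2 * (2 * n) - 2 * ((v z0).re * (z0 * a).re + (v z0).im * (z0 * a).im)) 1 :=
        hpow.sub hφ
      set d := ρ ^ 2 * (2 * n) - 2 * ((v z0).re * (z0 * a).re + (v z0).im * (z0 * a).im) with hd_def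
      have hd0 : d ≤ 0 := by
        set hfun := fun t : ℝ => ρ ^ 2 * t ^ (2 * n) - Complex.normSq (v ((t:ℂ) * z0)) with hfun_def
        have hW : HasDerivWithinAt hfun d (Iio (1:ℝ)) 1 := hh.hasDerivWithinAt
        rw [hasDerivWithinAt_iff_tendsto_slope] at hW
        have hsub : Iio (1:ℝ) \ {1} = Iio 1 := by
          apply diff_singleton_eq_self; simp
        rw [hsub] at hW
        have hev : ∀ᶠ t in 𝓝[<] (1:ℝ), slope hfun 1 t ≤ 0 := by
          filter_upwards [Ioo_mem_nhdsLT (show (0:ℝ) < 1 by norm_num)] with t ht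
          have h1 : hfun 1 = 0 := by
            simp only [hfun_def, one_pow, mul_one, hψ1]
            rw [Complex.normSq_eq_norm_sq, ← hρ_def]; ring
          have h2 : 0 ≤ hfun t := by
            have := hvb t ht.1.le ht.2.le
            simp only [hfun_def]; linarith
          rw [slope_def_field, h1, sub_zero]
          apply div_nonpos_of_nonneg_of_nonpos h2
          linarith [ht.2]
        exact le_of_tendsto hW hev
      have hcre' : c.re = (v z0).re * (z0 * a).re + (v z0).im * (z0 * a).im := by
        rw [hc_def]
        simp only [Complex.mul_re, Complex.conj_re, Complex.conj_im]
        ring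
      have hρ2 : Complex.normSq (v z0) = ρ ^ 2 := by
        rw [Complex.normSq_eq_norm_sq, ← hρ_def]
      rw [hcre']
      rw [hd_def] at hd0
      linarith
    -- the angular derivative : c.im = 0
    have hcim : c.im = 0 := by
      have hη : HasDerivAt (fun θ : ℝ => Complex.exp ((θ:ℂ) * Complex.I) * z0)
          (Complex.I * z0) 0 := by
        have h1 : HasDerivAt (fun θ : ℝ => ((θ:ℂ) * Complex.I)) Complex.I 0 := by
          have := (Complex.ofRealCLM.hasDerivAt (x := (0:ℝ))).mul_const Complex.I
          simpa using this
        have h2 := h1.cexp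
        have h3 := h2.mul_const z0
        simpa using h3
      have hη0 : Complex.exp (((0:ℝ):ℂ) * Complex.I) * z0 = z0 := by norm_num
      have hχψ : HasDerivAt (fun θ : ℝ => v (Complex.exp ((θ:ℂ) * Complex.I) * z0))
          (Complex.I * z0 * a) 0 := by
        have hv1 : HasDerivAt v a (Complex.exp (((0:ℝ):ℂ) * Complex.I) * z0) := by
          rw [hη0]; exact hda
        have := HasDerivAt.scomp
          (h := fun θ : ℝ => Complex.exp ((θ:ℂ) * Complex.I) * z0) (x := 0) hv1 hη
        simp only [smul_eq_mul] at this; exact this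
      have hχ : HasDerivAt (fun θ : ℝ => Complex.normSq (v (Complex.exp ((θ:ℂ) * Complex.I) * z0)))
          (2 * ((v z0).re * (Complex.I * z0 * a).re + (v z0).im * (Complex.I * z0 * a).im)) 0 := by
        have h1 := aux_hasDerivAt_normSq hχψ
        rwa [show v (Complex.exp (((0:ℝ):ℂ) * Complex.I) * z0) = v z0 by rw [hη0]] at h1
      have hlocmax : IsLocalMax
          (fun θ : ℝ => Complex.normSq (v (Complex.exp ((θ:ℂ) * Complex.I) * z0))) 0 := by
        apply Filter.Eventually.of_forall
        intro θ
        have hmem : Complex.exp ((θ:ℂ) * Complex.I) * z0 ∈ Metric.closedBall (0:ℂ) r1 := by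
          simp only [Metric.mem_closedBall, Complex.dist_eq, sub_zero, norm_mul]
          rw [Complex.norm_exp_ofReal_mul_I, one_mul, ← hr_def]
          exact hrr1
        have h1 := hmax _ hmem
        have h2 : Complex.normSq (v (Complex.exp ((θ:ℂ) * Complex.I) * z0))
            ≤ ρ ^ 2 := by
          rw [Complex.normSq_eq_norm_sq]
          exact pow_le_pow_left₀ (norm_nonneg _) h1 2
        have h3 : Complex.normSq (v (Complex.exp (((0:ℝ):ℂ) * Complex.I) * z0)) = ρ ^ 2 := by
          rw [hη0, Complex.normSq_eq_norm_sq, ← hρ_def]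
        exact le_trans h2 (le_of_eq h3.symm)
      have hd0 := hlocmax.deriv_eq_zero
      rw [hχ.deriv] at hd0
      have him : (v z0).re * (Complex.I * z0 * a).re + (v z0).im * (Complex.I * z0 * a).im
          = -c.im := by
        rw [hc_def]
        simp only [Complex.mul_re, Complex.mul_im, Complex.conj_re, Complex.conj_im,
          Complex.I_re, Complex.I_im]
        ring
      rw [him] at hd0
      linarith [hd0]
    -- conclude : z0 * a = (c/ρ²) v z0, contradiction with h
    have hρ2 : ((starRingEnd ℂ) (v z0)) * (v z0) = ((ρ ^ 2 : ℝ) : ℂ) := by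
      rw [mul_comm, Complex.mul_conj]
      norm_cast
      rw [Complex.normSq_eq_norm_sq, ← hρ_def]
    set k : ℂ := c / ((ρ ^ 2 : ℝ) : ℂ) with hk_def
    have hρ2ne : ((ρ ^ 2 : ℝ) : ℂ) ≠ 0 := by
      simp only [ne_eq, Complex.ofReal_eq_zero]
      positivity
    have hvz0ne : v z0 ≠ 0 := by
      intro hcontra
      rw [hρ_def, hcontra] at hρpos
      simp at hρpos
    have hkc : k * ((ρ ^ 2 : ℝ) : ℂ) = c := div_mul_cancel₀ c hρ2ne
    have hre0 : (((ρ ^ 2 : ℝ)) : ℂ).re = ρ ^ 2 := Complex.ofReal_re _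
    have him0 : (((ρ ^ 2 : ℝ)) : ℂ).im = 0 := Complex.ofReal_im _
    have hkcre : c.re = k.re * ρ ^ 2 := by
      rw [← hkc, Complex.mul_re, hre0, him0]; ring
    have hkcim : c.im = k.im * ρ ^ 2 := by
      rw [← hkc, Complex.mul_im, hre0, him0]; ring
    have hρ2pos : (0:ℝ) < ρ ^ 2 := by positivity
    have hkim : k.im = 0 := by
      have := hcim
      rw [hkcim] at this
      exact (mul_eq_zero.mp this).resolve_right hρ2pos.ne'
    have hkre : (n : ℝ) ≤ k.re := by
      have := hcre
      rw [hkcre] at this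
      exact le_of_mul_le_mul_right (by linarith) hρ2pos
    have hza : z0 * a = k * v z0 := by
      have h1 : c * v z0 = ((ρ ^ 2 : ℝ) : ℂ) * (z0 * a) := by
        rw [hc_def]
        calc (starRingEnd ℂ) (v z0) * (z0 * a) * v z0
            = ((starRingEnd ℂ) (v z0) * v z0) * (z0 * a) := by ring
          _ = ((ρ ^ 2 : ℝ) : ℂ) * (z0 * a) := by rw [hρ2]
      have h2 : k * v z0 = c * v z0 / ((ρ ^ 2 : ℝ) : ℂ) := by
        rw [hk_def]; ring
      rw [h2, h1, mul_comm (((ρ ^ 2 : ℝ) : ℂ)) (z0 * a), mul_div_assoc, div_self hρ2ne, mul_one]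
    -- |k - β| ≥ |n - β|
    have habs : ‖(n:ℂ) - β‖ ≤ ‖k - β‖ := by
      rw [Complex.norm_def, Complex.norm_def]
      apply Real.sqrt_le_sqrt
      rw [Complex.normSq_apply, Complex.normSq_apply]
      simp only [Complex.sub_re, Complex.sub_im, Complex.natCast_re, Complex.natCast_im, hkim]
      nlinarith [hkre, hβ]
    -- final contradiction
    have hfinal := h z0 hz0ball
    rw [← hvderiv z0] at hfinal
    have heq : z0 * deriv v z0 - β * (deriv f z0 - 1) = (k - β) * v z0 := by
      have h1 : deriv f z0 - 1 = v z0 := rfl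
      rw [h1, ← ha_def, hza]; ring
    rw [show (deriv f z0 - 1) = v z0 from rfl] at hfinal
    rw [heq] at hfinal
    rw [norm_mul, ← hρ_def] at hfinal
    have : (1 - α) * ‖(n:ℂ) - β‖ ≤ ‖k - β‖ * ρ := by
      rw [mul_comm]
      exact mul_le_mul habs hρ1 hα'.le (norm_nonneg _)
    linarith
  -- derive both conclusions
  intro z hz
  have h1 := key z hz
  constructor
  · exact h1
  · have h2 : |(v z).re| ≤ ‖v z‖ := Complex.abs_re_le_norm _
    have h3 : (deriv f z).re = (v z).re + 1 := by
      rw [hv_def]; simp [Complex.sub_re]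
    rw [h3]
    have := abs_le.mp h2
    linarith [this.1]
end

section
/- Let f(z) = z + a_{n+1}z^{n+1} + ... be analytic in the open unit disk U and β a complex number with Re(β) < n. If either (i) 0 < α ≤ 1/2 and |z·f''(z) − β·(f'(z) − 1)| < α·|n−β| for all z ∈ U, or (ii) 1/2 ≤ α < 1 and |z·f''(z) − β·(f'(z) − 1)| < (1−α)·|n−β| for all z ∈ U, then |1/f'(z) − 1/(2α)| < 1/(2α) for all z ∈ U; in particular Re(f'(z)) > α. -/
open Metric Complex Set Filter Topology


lemma myfact (n : ℕ) (q : ℂ → ℂ) (hq : DifferentiableOn ℂ q (ball 0 1))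
    (hvan : ∀ j, j < n → iteratedDeriv j q 0 = 0) :
    ∃ g : ℂ → ℂ, DifferentiableOn ℂ g (ball 0 1) ∧ ∀ z, q z = z ^ n * g z := by
  have hb : (ball (0:ℂ) 1) ∈ 𝓝 (0:ℂ) := isOpen_ball.mem_nhds (by simp)
  have hqa : AnalyticAt ℂ q 0 := (hq.analyticOnNhd isOpen_ball) 0 (by simp)
  obtain ⟨p, hp⟩ := hqa
  have hcoeff : ∀ j, j < n → p.coeff j = 0 := by
    intro j hj
    obtain ⟨r, hr⟩ := hp
    have h1 := hr.factorial_smul (1:ℂ) j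
    rw [← iteratedDeriv_eq_iteratedFDeriv, hvan j hj] at h1
    have h4 : (j.factorial : ℂ) * p.coeff j = 0 := by
      rw [← nsmul_eq_mul]; exact h1
    exact (mul_eq_zero.mp h4).resolve_left (by exact_mod_cast j.factorial_ne_zero)
  have key : ∀ j, j ≤ n → DifferentiableOn ℂ ((Function.swap dslope 0)^[j] q) (ball 0 1)
      ∧ ∀ z, q z = z ^ j * ((Function.swap dslope 0)^[j] q) z := by
    intro j
    induction j with
    | zero => intro _; exact ⟨hq, fun z => by simp⟩
    | succ k ih =>
      intro hk
      obtain ⟨hdk, heqk⟩ := ih (Nat.le_of_succ_le hk)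
      set v := (Function.swap dslope 0)^[k] q with hv
      have hps : HasFPowerSeriesAt v (FormalMultilinearSeries.fslope^[k] p) 0 :=
        hp.has_fpower_series_iterate_dslope_fslope k
      have hv0 : v 0 = 0 := by
        have h5 := hps.coeff_zero (fun _ => (1:ℂ))
        have h6 : (FormalMultilinearSeries.fslope^[k] p).coeff 0 = p.coeff k := by
          rw [FormalMultilinearSeries.coeff_iterate_fslope]; norm_num
        rw [← h5]
        rw [show ((FormalMultilinearSeries.fslope^[k] p 0) fun _ => (1:ℂ)) =
          (FormalMultilinearSeries.fslope^[k] p).coeff 0 from rfl, h6]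
        exact hcoeff k (Nat.lt_of_succ_le hk)
      refine ⟨?_, ?_⟩
      · rw [Function.iterate_succ_apply']
        exact (Complex.differentiableOn_dslope hb).mpr hdk
      · intro z
        rw [Function.iterate_succ_apply']
        have h7 := sub_smul_dslope v 0 z
        rw [hv0, sub_zero, sub_zero, smul_eq_mul] at h7
        have : q z = z ^ k * (z * dslope v 0 z) := by rw [h7, ← heqk z]
        rw [this]; unfold Function.swap; ring
  obtain ⟨hd, he⟩ := key n le_rfl
  exact ⟨_, hd, he⟩

lemma mycore (n : ℕ) (hn : 1 ≤ n) (q : ℂ → ℂ) (hq : DifferentiableOn ℂ q (ball 0 1))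
    (hvan : ∀ j, j < n → iteratedDeriv j q 0 = 0) (M : ℝ) (hM : 0 < M) (β : ℂ) (hβ : β.re < n)
    (hb : ∀ z ∈ ball (0:ℂ) 1,
      ‖z * deriv q z - β * q z‖ < M * ‖(n:ℂ) - β‖) :
    ∀ z ∈ ball (0:ℂ) 1, ‖q z‖ < M := by
  by_contra hcon
  push_neg at hcon
  obtain ⟨z₁, hz₁, hge⟩ := hcon
  have hq0 : q 0 = 0 := by simpa using hvan 0 (by omega)
  have hz₁0 : z₁ ≠ 0 := by
    rintro rfl; rw [hq0] at hge; simp at hge; linarith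
  set r₁ : ℝ := ‖z₁‖ with hr₁
  have hr₁0 : 0 < r₁ := by simpa [hr₁] using hz₁0
  have hr₁1 : r₁ < 1 := by simpa [mem_ball, Complex.dist_eq] using hz₁
  have hsub : closedBall (0:ℂ) r₁ ⊆ ball 0 1 := by
    intro w hw
    simp only [mem_closedBall, mem_ball, Complex.dist_eq, sub_zero] at hw ⊢
    linarith
  -- maximizer on the sphere
  have hcont : ContinuousOn (fun z => ‖q z‖) (sphere (0:ℂ) r₁) :=
    (hq.continuousOn.mono (sphere_subset_closedBall.trans hsub)).norm
  obtain ⟨z₀, hz₀s, hmax⟩ := (isCompact_sphere (0:ℂ) r₁).exists_isMaxOn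
    (NormedSpace.sphere_nonempty.mpr hr₁0.le) hcont
  have hz₀r : ‖z₀‖ = r₁ := by simpa [Complex.dist_eq] using hz₀s
  set M₁ : ℝ := ‖q z₀‖ with hM₁def
  -- maximum modulus on closed ball
  have hdcc : DiffContOnCl ℂ q (ball (0:ℂ) r₁) :=
    ⟨hq.mono (ball_subset_ball hr₁1.le),
      (hq.continuousOn.mono (by rw [closure_ball (0:ℂ) hr₁0.ne']; exact hsub))⟩
  have hmaxball : ∀ z ∈ closedBall (0:ℂ) r₁, ‖q z‖ ≤ M₁ := by
    intro z hz
    have := Complex.norm_le_of_forall_mem_frontier_norm_le isBounded_ball hdcc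
      (fun w hw => by
        rw [frontier_ball (0:ℂ) hr₁0.ne'] at hw
        exact hmax hw)
      (by rwa [closure_ball (0:ℂ) hr₁0.ne'])
    exact this
  have hM₁ : M ≤ M₁ := le_trans hge (hmaxball z₁ (by simp [mem_closedBall, Complex.dist_eq, hr₁]))
  have hM₁0 : 0 < M₁ := lt_of_lt_of_le hM hM₁
  have hqz₀ : q z₀ ≠ 0 := by
    intro h; rw [hM₁def, h] at hM₁0; simp at hM₁0
  -- factor q = z^n g and Schwarz-type bound
  obtain ⟨g, hg, hfac⟩ := myfact n q hq hvan
  have hgb : ∀ w ∈ closedBall (0:ℂ) r₁, ‖g w‖ ≤ M₁ / r₁ ^ n := by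
    intro w hw
    have hgcc : DiffContOnCl ℂ g (ball (0:ℂ) r₁) :=
      ⟨hg.mono (ball_subset_ball hr₁1.le),
        (hg.continuousOn.mono (by rw [closure_ball (0:ℂ) hr₁0.ne']; exact hsub))⟩
    have := Complex.norm_le_of_forall_mem_frontier_norm_le isBounded_ball hgcc
      (fun w' hw' => by
        rw [frontier_ball (0:ℂ) hr₁0.ne'] at hw'
        have habs : ‖w'‖ = r₁ := by simpa [Complex.dist_eq] using hw'
        have h1 : ‖q w'‖ = r₁ ^ n * ‖g w'‖ := by
          rw [hfac w']; simp [norm_mul, norm_pow, habs]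
        have h2 : ‖q w'‖ ≤ M₁ := hmax hw'
        have h3 : (0:ℝ) < r₁ ^ n := by positivity
        rw [show ‖g w'‖ = ‖g w'‖ from rfl]
        rw [le_div_iff₀ h3]
        calc ‖g w'‖ * r₁ ^ n = ‖q w'‖ := by rw [h1]; ring
          _ ≤ M₁ := h2)
      (by rwa [closure_ball (0:ℂ) hr₁0.ne'])
    exact this
  have hSch : ∀ s : ℝ, 0 ≤ s → s ≤ 1 → ‖q ((s:ℂ) * z₀)‖ ≤ s ^ n * M₁ := by
    intro s hs0 hs1
    have hmem : (s:ℂ) * z₀ ∈ closedBall (0:ℂ) r₁ := by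
      simp only [mem_closedBall, Complex.dist_eq, sub_zero, norm_mul, Complex.norm_real, Real.norm_eq_abs, hz₀r,
        _root_.abs_of_nonneg hs0]
      nlinarith [hr₁0]
    have h1 : ‖q ((s:ℂ) * z₀)‖ = (s * r₁) ^ n * ‖g ((s:ℂ)*z₀)‖ := by
      rw [hfac]; simp [norm_mul, norm_pow, hz₀r, _root_.abs_of_nonneg hs0, mul_pow]
    rw [h1]
    have h2 := hgb _ hmem
    have h3 : (0:ℝ) ≤ (s * r₁) ^ n := by positivity
    calc (s * r₁) ^ n * ‖g ((s:ℂ)*z₀)‖ ≤ (s*r₁)^n * (M₁ / r₁ ^ n) :=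
          mul_le_mul_of_nonneg_left h2 h3
      _ = s ^ n * M₁ * (r₁ ^ n / r₁ ^ n) := by ring
      _ = s ^ n * M₁ := by rw [div_self (by positivity : (r₁:ℝ)^n ≠ 0), mul_one]

  -- derivative setup
  have hz₀b : z₀ ∈ ball (0:ℂ) 1 := hsub (sphere_subset_closedBall hz₀s)
  have hd₀ : DifferentiableAt ℂ q z₀ := hq.differentiableAt (isOpen_ball.mem_nhds hz₀b)
  set d : ℂ := deriv q z₀ with hd
  have hder : HasDerivAt q d z₀ := hd₀.hasDerivAt
  set c : ℂ := z₀ * d * (starRingEnd ℂ) (q z₀) with hc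
  -- (1) angular: c.im = 0
  have him : c.im = 0 := by
    set θ₀ : ℝ := z₀.arg with hθ₀
    set E : ℝ → ℂ := fun θ => (r₁:ℂ) * Complex.exp (θ * Complex.I) with hE
    have hEθ₀ : E θ₀ = z₀ := by
      rw [hE]; simp only []
      rw [show ((r₁:ℝ):ℂ) = ((‖z₀‖ : ℝ):ℂ) by rw [hz₀r]]
      exact Complex.norm_mul_exp_arg_mul_I z₀
    have hEs : ∀ θ : ℝ, E θ ∈ sphere (0:ℂ) r₁ := by
      intro θ
      simp [hE, Complex.dist_eq, norm_mul, Complex.norm_exp, _root_.abs_of_nonneg hr₁0.le]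
    have h8 : HasDerivAt (fun θ:ℝ => (θ:ℂ)) 1 θ₀ := by
      exact Complex.ofRealCLM.hasDerivAt (x := θ₀)
    have h9 : HasDerivAt (fun θ:ℝ => (θ:ℂ) * Complex.I) Complex.I θ₀ := by
      simpa using h8.mul_const Complex.I
    have h10 : HasDerivAt (fun θ:ℝ => Complex.exp ((θ:ℂ) * Complex.I))
        (Complex.exp ((θ₀:ℂ) * Complex.I) * Complex.I) θ₀ := by
      simpa using h9.cexp
    have hEd : HasDerivAt E (z₀ * Complex.I) θ₀ := by
      have h11 := h10.const_mul ((r₁:ℝ):ℂ)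
      have : ((r₁:ℝ):ℂ) * (Complex.exp ((θ₀:ℂ) * Complex.I) * Complex.I) = z₀ * Complex.I := by
        rw [← mul_assoc, show ((r₁:ℝ):ℂ) * Complex.exp ((θ₀:ℝ) * Complex.I) = E θ₀ from rfl,
          hEθ₀]
      rwa [this] at h11
    have hQd : HasDerivAt (fun θ => q (E θ)) ((z₀ * Complex.I) * d) θ₀ := by
      have := HasDerivAt.scomp (x := θ₀) (by rwa [hEθ₀]) hEd
      simp only [smul_eq_mul] at this; exact this
    set D : ℂ := (z₀ * Complex.I) * d with hD
    have hre : HasDerivAt (fun θ => (q (E θ)).re) D.re θ₀ :=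
      Complex.reCLM.hasFDerivAt.comp_hasDerivAt θ₀ hQd
    have himd : HasDerivAt (fun θ => (q (E θ)).im) D.im θ₀ :=
      Complex.imCLM.hasFDerivAt.comp_hasDerivAt θ₀ hQd
    have hF : HasDerivAt (fun θ => Complex.normSq (q (E θ)))
        ((q z₀).re * D.re + (q z₀).re * D.re + ((q z₀).im * D.im + (q z₀).im * D.im)) θ₀ := by
      have := (hre.mul hre).add (himd.mul himd)
      simp only [Complex.normSq_apply, hEθ₀] at this ⊢
      exact this.congr_deriv (by ring)
    have hloc : IsLocalMax (fun θ => Complex.normSq (q (E θ))) θ₀ := by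
      apply Filter.Eventually.of_forall
      intro θ
      simp only [Complex.normSq_eq_norm_sq, hEθ₀]
      have := hmax (hEs θ)
      simp only [IsMaxOn, IsMaxFilter] at this
      have h2 : ‖q (E θ)‖ ≤ ‖q z₀‖ := this
      exact pow_le_pow_left₀ (by positivity) h2 2
    have h0 := hloc.hasDerivAt_eq_zero hF
    simp only [hc, hD, Complex.mul_re, Complex.mul_im, Complex.conj_re, Complex.conj_im,
      Complex.I_re, Complex.I_im] at h0 ⊢
    ring_nf at h0 ⊢
    linarith
  -- (2) radial: n * M₁^2 ≤ c.re
  have hre : (n : ℝ) * M₁ ^ 2 ≤ c.re := by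
    have hsd : HasDerivAt (fun s:ℝ => (s:ℂ) * z₀) z₀ 1 := by
      simpa using (Complex.ofRealCLM.hasDerivAt (x := (1:ℝ))).mul_const z₀
    have hQ2 : HasDerivAt (fun s:ℝ => q ((s:ℂ) * z₀)) (z₀ * d) 1 := by
      have := HasDerivAt.scomp (x := (1:ℝ))
        (by rw [show ((1:ℝ):ℂ) * z₀ = z₀ by simp]; exact hder) hsd
      simp only [smul_eq_mul] at this; exact this
    have hre2 : HasDerivAt (fun s:ℝ => (q ((s:ℂ) * z₀)).re) (z₀*d).re 1 :=
      Complex.reCLM.hasFDerivAt.comp_hasDerivAt 1 hQ2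
    have him2 : HasDerivAt (fun s:ℝ => (q ((s:ℂ) * z₀)).im) (z₀*d).im 1 :=
      Complex.imCLM.hasFDerivAt.comp_hasDerivAt 1 hQ2
    have hq1 : q (((1:ℝ):ℂ) * z₀) = q z₀ := by norm_num
    have hF2 : HasDerivAt (fun s:ℝ => Complex.normSq (q ((s:ℂ) * z₀)))
        (2 * ((q z₀).re * (z₀*d).re + (q z₀).im * (z₀*d).im)) 1 := by
      have := (hre2.mul hre2).add (him2.mul him2)
      simp only [Complex.normSq_apply, hq1] at this ⊢
      exact this.congr_deriv (by ring)
    have hpow : HasDerivAt (fun s:ℝ => s ^ (2*n) * M₁^2) (2 * n * M₁^2) 1 := by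
      have := (hasDerivAt_pow (2*n) (1:ℝ)).mul_const (M₁^2)
      simpa using this
    have hΦ : HasDerivAt (fun s:ℝ => Complex.normSq (q ((s:ℂ) * z₀)) - s ^ (2*n) * M₁^2)
        (2 * ((q z₀).re * (z₀*d).re + (q z₀).im * (z₀*d).im) - 2 * n * M₁^2) 1 := hF2.sub hpow
    set Φ : ℝ → ℝ := fun s => Complex.normSq (q ((s:ℂ) * z₀)) - s ^ (2*n) * M₁^2 with hΦdef
    have hΦ1 : Φ 1 = 0 := by
      simp [hΦdef, hq1, Complex.normSq_eq_norm_sq, ← hM₁def]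
    have hΦle : ∀ s ∈ Ioo (0:ℝ) 1, Φ s ≤ 0 := by
      intro s hs
      have h1 := hSch s hs.1.le hs.2.le
      have h2 : Complex.normSq (q ((s:ℂ)*z₀)) ≤ (s ^ n * M₁)^2 := by
        rw [Complex.normSq_eq_norm_sq]
        exact pow_le_pow_left₀ (by positivity) h1 2
      simp only [hΦdef]
      have h3 : (s ^ n * M₁)^2 = s^(2*n) * M₁^2 := by rw [pow_mul]; ring
      nlinarith [h2, h3]
    have htend : Tendsto (slope Φ 1) (𝓝[<] 1) (𝓝 (2 * ((q z₀).re * (z₀*d).re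
        + (q z₀).im * (z₀*d).im) - 2 * n * M₁^2)) := by
      have := hasDerivAt_iff_tendsto_slope.mp hΦ
      exact this.mono_left (nhdsWithin_mono 1 (fun x hx => ne_of_lt hx))
    have hslope_nonneg : ∀ᶠ s in 𝓝[<] (1:ℝ), 0 ≤ slope Φ 1 s := by
      filter_upwards [Ioo_mem_nhdsLT_of_mem (by norm_num : (1:ℝ) ∈ Ioc (0:ℝ) 1)] with s hs
      have h1 : Φ s ≤ 0 := hΦle s hs
      have h2 : s - 1 < 0 := by linarith [hs.2]
      rw [slope_def_field]
      rw [hΦ1]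
      have h4 : 0 ≤ Φ s / (s - 1) := div_nonneg_iff.mpr (Or.inr ⟨h1, h2.le⟩)
      simpa using h4
    have hkey : 0 ≤ 2 * ((q z₀).re * (z₀*d).re + (q z₀).im * (z₀*d).im) - 2 * n * M₁^2 :=
      ge_of_tendsto htend hslope_nonneg
    have hcre : c.re = (q z₀).re * (z₀*d).re + (q z₀).im * (z₀*d).im := by
      simp only [hc, Complex.mul_re, Complex.mul_im, Complex.conj_re, Complex.conj_im]
      ring
    rw [hcre]; linarith

  -- conclude: z₀ q'(z₀) = m q(z₀) with m ≥ n real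
  set m : ℝ := c.re / M₁^2 with hm
  have hMsq : Complex.normSq (q z₀) = M₁^2 := by
    rw [Complex.normSq_eq_norm_sq, ← hM₁def]
  have hnm : (n:ℝ) ≤ m := by
    rw [hm, le_div_iff₀ (by positivity)]; linarith [hre]
  have hzd : z₀ * d = (m:ℂ) * q z₀ := by
    have h1 : z₀ * d * ((starRingEnd ℂ) (q z₀) * q z₀) = c * q z₀ := by rw [hc]; ring
    rw [show (starRingEnd ℂ) (q z₀) * q z₀ = (Complex.normSq (q z₀) : ℂ) by
      rw [mul_comm, Complex.mul_conj], hMsq] at h1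
    have hcre2 : c = ((c.re : ℝ) : ℂ) := by
      apply Complex.ext
      · simp
      · simp [him]
    rw [hcre2] at h1
    have hM₁2 : ((M₁:ℝ):ℂ) ≠ 0 := by
      exact_mod_cast (ne_of_gt hM₁0)
    rw [hm]
    push_cast
    field_simp at h1 ⊢
    push_cast at h1
    linear_combination h1
  have hcontr := hb z₀ hz₀b
  have heq : z₀ * deriv q z₀ - β * q z₀ = ((m:ℂ) - β) * q z₀ := by
    rw [← hd, hzd]; ring
  rw [heq, norm_mul] at hcontr
  have habs : ‖(n:ℂ) - β‖ ≤ ‖(m:ℂ) - β‖ := by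
    rw [Complex.norm_def, Complex.norm_def]
    apply Real.sqrt_le_sqrt
    simp only [Complex.normSq_apply, Complex.sub_re, Complex.sub_im, Complex.ofReal_re,
      Complex.ofReal_im, Complex.natCast_re, Complex.natCast_im]
    nlinarith [hβ, hnm]
  have h5 : 0 < ‖(n:ℂ) - β‖ := by
    rw [norm_pos_iff]
    intro h
    have : ((n:ℂ) - β).re = 0 := by rw [h]; simp
    simp only [Complex.sub_re, Complex.natCast_re] at this
    linarith
  have h6 : ‖q z₀‖ = M₁ := hM₁def.symm
  rw [h6] at hcontr
  nlinarith [hcontr, habs, hM₁, h5, hM, hM₁0]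

/-- Theorem 10 (Theorem 3): If `f ∈ A_n`, `Re β < n`, and either
`0 < α ≤ 1/2` with `|z f''(z) - β (f'(z)-1)| < α |n-β|` on `U`, or
`1/2 ≤ α < 1` with `|z f''(z) - β (f'(z)-1)| < (1-α) |n-β|` on `U`, then
`|1/f'(z) - 1/(2α)| < 1/(2α)` on `U`; in particular `Re f'(z) > α`. -/
theorem stmt_7 (n : ℕ) (hn : 1 ≤ n) (f : ℂ → ℂ)
    (hf : AnalyticOn ℂ f (Metric.ball 0 1))
    (hf0 : f 0 = 0) (hf1 : deriv f 0 = 1)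
    (hcoef : ∀ k : ℕ, 2 ≤ k → k ≤ n → iteratedDeriv k f 0 = 0)
    (α : ℝ) (β : ℂ) (hβ : β.re < n)
    (h : (0 < α ∧ α ≤ 1 / 2 ∧ ∀ z ∈ Metric.ball (0 : ℂ) 1,
            ‖z * deriv (deriv f) z - β * (deriv f z - 1)‖ <
              α * ‖(n : ℂ) - β‖) ∨
         (1 / 2 ≤ α ∧ α < 1 ∧ ∀ z ∈ Metric.ball (0 : ℂ) 1,
            ‖z * deriv (deriv f) z - β * (deriv f z - 1)‖ <
              (1 - α) * ‖(n : ℂ) - β‖)) :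
    ∀ z ∈ Metric.ball (0 : ℂ) 1,
      deriv f z ≠ 0 ∧ ‖1 / deriv f z - 1 / (2 * (α : ℂ))‖ < 1 / (2 * α) ∧
        α < (deriv f z).re := by
  obtain ⟨hα0, hα1, M, hM0, hMα, hbM⟩ :
      0 < α ∧ α < 1 ∧ ∃ M : ℝ, 0 < M ∧ M ≤ 1 - α ∧ ∀ z ∈ Metric.ball (0 : ℂ) 1,
        ‖z * deriv (deriv f) z - β * (deriv f z - 1)‖ <
          M * ‖(n : ℂ) - β‖ := by
    rcases h with ⟨h1, h2, h3⟩ | ⟨h1, h2, h3⟩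
    · exact ⟨h1, by linarith, α, h1, by linarith, h3⟩
    · exact ⟨by linarith, h2, 1 - α, by linarith, le_rfl, h3⟩
  set q : ℂ → ℂ := fun z => deriv f z - 1 with hqdef
  have hfa : AnalyticOnNhd ℂ f (ball 0 1) := (isOpen_ball.analyticOn_iff_analyticOnNhd).mp hf
  have hd1 : AnalyticOnNhd ℂ (deriv f) (ball 0 1) := hfa.deriv
  have hqdiff : DifferentiableOn ℂ q (ball 0 1) := fun z hz =>
    (((hd1 z hz).differentiableAt.sub_const 1).differentiableWithinAt)
  have hderivq : deriv q = deriv (deriv f) := by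
    funext z
    simp only [hqdef]
    exact deriv_sub_const 1
  have hvan : ∀ j, j < n → iteratedDeriv j q 0 = 0 := by
    intro j hj
    match j with
    | 0 => simp [hqdef, hf1]
    | Nat.succ k =>
      rw [iteratedDeriv_succ', hderivq, ← iteratedDeriv_succ', ← iteratedDeriv_succ']
      exact hcoef (k+2) (by omega) (by omega)
  have hbound : ∀ z ∈ ball (0:ℂ) 1,
      ‖z * deriv q z - β * q z‖ < M * ‖(n:ℂ) - β‖ := by
    intro z hz
    rw [hderivq]
    exact hbM z hz
  have hqlt := mycore n hn q hqdiff hvan M hM0 β hβ hbound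
  intro z hz
  have hlt : ‖deriv f z - 1‖ < M := hqlt z hz
  have habs_re : |(deriv f z).re - 1| ≤ ‖deriv f z - 1‖ := by
    have := Complex.abs_re_le_norm (deriv f z - 1)
    simpa using this
  have hre : α < (deriv f z).re := by
    have h2 := lt_of_le_of_lt habs_re hlt
    have h3 := abs_lt.mp h2
    linarith [h3.1, hMα]
  have hne : deriv f z ≠ 0 := by
    intro h
    rw [h] at hlt
    simp at hlt
    linarith [hMα, hα0]
  refine ⟨hne, ?_, hre⟩
  set w := deriv f z with hw
  have hwpos : 0 < ‖w‖ := norm_pos_iff.mpr hne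
  have h2α : (2 * (α:ℂ)) ≠ 0 := by
    simp only [ne_eq, mul_eq_zero]
    push_neg
    exact ⟨by norm_num, by exact_mod_cast hα0.ne'⟩
  have heq : 1/w - 1/(2*(α:ℂ)) = (2*(α:ℂ) - w)/(w*(2*(α:ℂ))) := by
    rw [div_sub_div _ _ hne h2α]; ring
  have habs2α : ‖2*(α:ℂ)‖ = 2*α := by
    rw [show (2*(α:ℂ)) = (((2*α : ℝ)):ℂ) by push_cast; ring, Complex.norm_real, Real.norm_eq_abs]
    exact _root_.abs_of_nonneg (by linarith)
  have hkey : ‖2*(α:ℂ) - w‖ < ‖w‖ := by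
    apply lt_of_pow_lt_pow_left₀ 2 hwpos.le
    rw [Complex.sq_norm, Complex.sq_norm]
    simp only [Complex.normSq_apply, Complex.sub_re, Complex.sub_im, Complex.mul_re,
      Complex.mul_im, Complex.ofReal_re, Complex.ofReal_im, Complex.re_ofNat, Complex.im_ofNat]
    nlinarith [hre, hα0]
  rw [heq, norm_div, norm_mul, habs2α, div_lt_div_iff₀ (by positivity) (by positivity)]
  nlinarith [hkey, hwpos, hα0]
end
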